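/- arXiv:2310.07670 — 5 statements merged into one kernel-verified Lean document; each statement's English description precedes it below -/
import Mathlib

section
/- Let x0 ∈ ℝ², R, θ > 0, p ∈ [1,∞). Let a : ℝ² → ℝ² be affine, a(x) = A x + b, and let U ⊆ B(x0,R) with L²(U) ≥ θ L²(B(x0,R)). Then there is a constant c > 0 depending only on θ and p such that ‖a‖_{L^p(B(x0,R))} ≤ (√π R)^{2/p} ‖a‖_{L^∞(B(x0,R))} ≤ c ‖a‖_{L^p(U)} and |A| ≤ c R^{-(2/p+1)} ‖a‖_{L^p(U)}. -/
/-!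
Let `M` be the maximum of `|a|` on the closed ball, attained at `xs`. Pairing `a` with the unit
vector along `a xs` gives a real affine function, so the set where `|a| ≤ ε M` lies in a slab of
width `O(ε R)` and has measure `O(ε R²)`. For `ε` small in terms of `θ`, at least half of `U` (in
measure) therefore carries `|a| ≥ ε M`, and Chebyshev gives `‖a‖_{L^p(U)} ≳ ε M (θ R²)^{1/p}`.
This dominates both `‖a‖_{L^∞(B)} ≤ M` and `|A| ≤ 2 M / R`, the latter because
`A x = a (x0 + x) - a x0`. The first inequality is Hölder's.
-/

open Metric Set MeasureTheory

noncomputable section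

abbrev E2 := EuclideanSpace ℝ (Fin 2)

open Module Real
open scoped ENNReal RealInnerProductSpace

theorem ContinuousLinearMap.opNorm_le_of_norm_add_le_on_closedBall {E F : Type*}
    [NormedAddCommGroup E] [NormedSpace ℝ E] [NormedAddCommGroup F] [NormedSpace ℝ F]
    (A : E →L[ℝ] F) (b : F) {x0 : E} {R M : ℝ} (hR : 0 < R)
    (hM : ∀ x ∈ closedBall x0 R, ‖A x + b‖ ≤ M) : ‖A‖ ≤ 2 * M / R := by
  have hM0 : 0 ≤ M := (norm_nonneg _).trans (hM x0 (mem_closedBall_self hR.le))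
  refine A.opNorm_le_of_unit_norm (by positivity) fun x hx => ?_
  have hRx : x0 + R • x ∈ closedBall x0 R := by
    simp [norm_smul, hx, abs_of_pos hR]
  rw [le_div_iff₀ hR]
  calc ‖A x‖ * R = ‖(A (x0 + R • x) + b) - (A x0 + b)‖ := by
        rw [map_add, map_smul, add_sub_add_right_eq_sub, add_sub_cancel_left, norm_smul,
          Real.norm_of_nonneg hR.le, mul_comm]
    _ ≤ M + M := (norm_sub_le _ _).trans (add_le_add (hM _ hRx) (hM _ (mem_closedBall_self hR.le)))
    _ = 2 * M := by ring

theorem MeasureTheory.mul_meas_ge_rpow_le_eLpNorm {α ε' : Type*} [MeasurableSpace α]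
    (μ : Measure α) [TopologicalSpace ε'] [ContinuousENorm ε'] {p : ℝ≥0∞} (hp0 : p ≠ 0)
    (hptop : p ≠ ∞) {f : α → ε'} (hf : AEStronglyMeasurable f μ) (t : ℝ≥0∞) :
    t * μ {x | t ≤ ‖f x‖ₑ} ^ (1 / p.toReal) ≤ eLpNorm f p μ := by
  have hp : 0 < p.toReal := ENNReal.toReal_pos hp0 hptop
  convert pow_mul_meas_ge_le_eLpNorm μ hp0 hptop hf (t ^ p.toReal) using 1
  rw [ENNReal.mul_rpow_of_nonneg _ _ (by positivity), ← ENNReal.rpow_mul,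
    mul_one_div_cancel hp.ne', ENNReal.rpow_one]
  congr 3
  ext x
  exact (ENNReal.rpow_le_rpow_iff hp).symm

variable {F : Type*} [NormedAddCommGroup F] [InnerProductSpace ℝ F] [CompleteSpace F]

section Slab

variable {E : Type*} [NormedAddCommGroup E] [InnerProductSpace ℝ E] [FiniteDimensional ℝ E]
  [MeasurableSpace E] [BorelSpace E]

theorem volume_inter_ball_le_of_inner_mem_Icc {n : ℕ} (hn : finrank ℝ E = n + 1) {e : E}
    (he : ‖e‖ = 1) (x0 : E) (R s t : ℝ) :
    volume {x ∈ ball x0 R | ⟪e, x⟫ ∈ Icc s t} ≤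
      ENNReal.ofReal (t - s) * ENNReal.ofReal (2 * R) ^ n := by
  obtain ⟨B, hB⟩ := Orthonormal.exists_orthonormalBasis_extension_of_card_eq
    (ι := Fin (n + 1)) (v := fun _ => e) (s := {0}) (by simpa using hn)
    (by simpa [orthonormal_iff_ite] using he)
  let I : Fin (n + 1) → Set ℝ :=
    Fin.cons (Icc s t) fun i => Icc (⟪B i.succ, x0⟫ - R) (⟪B i.succ, x0⟫ + R)
  have hsub : {x ∈ ball x0 R | ⟪e, x⟫ ∈ Icc s t} ⊆
      B.repr ⁻¹' ((MeasurableEquiv.toLp 2 (Fin (n + 1) → ℝ)).symm ⁻¹' univ.pi I) := by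
    rintro x ⟨hx, hxe⟩
    simp only [mem_preimage, mem_univ_pi]
    intro i
    refine Fin.cases ?_ (fun i => ?_) i
    · simpa [I, OrthonormalBasis.repr_apply_apply, hB 0 rfl] using hxe
    · have hdist : |⟪B i.succ, x⟫ - ⟪B i.succ, x0⟫| ≤ R := by
        rw [← inner_sub_right]
        calc |⟪B i.succ, x - x0⟫| ≤ ‖B i.succ‖ * ‖x - x0‖ := abs_real_inner_le_norm _ _
          _ ≤ R := by rw [B.norm_eq_one, one_mul, ← dist_eq_norm]; exact (mem_ball.mp hx).le
      simp only [I, Fin.cons_succ, MeasurableEquiv.toLp_symm_apply,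
        OrthonormalBasis.repr_apply_apply, mem_Icc]
      constructor <;> linarith [abs_le.mp hdist]
  calc volume {x ∈ ball x0 R | ⟪e, x⟫ ∈ Icc s t}
      ≤ volume (B.repr ⁻¹' ((MeasurableEquiv.toLp 2 (Fin (n + 1) → ℝ)).symm ⁻¹' univ.pi I)) :=
        measure_mono hsub
    _ = volume (univ.pi I) :=
        (B.measurePreserving_measurableEquiv.measure_preimage_equiv _).trans
          ((EuclideanSpace.volume_preserving_symm_measurableEquiv_toLp _).measure_preimage_equiv _)
    _ = ENNReal.ofReal (t - s) * ENNReal.ofReal (2 * R) ^ n := by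
        rw [volume_pi_pi, Fin.prod_univ_succ]
        have hlen (c : ℝ) : c + R - (c - R) = 2 * R := by ring
        simp only [I, Fin.cons_zero, Fin.cons_succ, Real.volume_Icc, hlen, Finset.prod_const,
          Finset.card_univ, Fintype.card_fin]

theorem volume_slab_inter_ball_le {n : ℕ} (hn : finrank ℝ E = n + 1) {u : E} (hu : u ≠ 0)
    (x0 : E) (R s δ : ℝ) :
    volume {x ∈ ball x0 R | |⟪u, x⟫ - s| ≤ δ} ≤
      ENNReal.ofReal (2 * δ / ‖u‖) * ENNReal.ofReal (2 * R) ^ n := by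
  have hu' : 0 < ‖u‖ := norm_pos_iff.mpr hu
  have he : ‖‖u‖⁻¹ • u‖ = 1 := by rw [norm_smul, norm_inv, norm_norm, inv_mul_cancel₀ hu'.ne']
  calc volume {x ∈ ball x0 R | |⟪u, x⟫ - s| ≤ δ}
      ≤ volume {x ∈ ball x0 R | ⟪‖u‖⁻¹ • u, x⟫ ∈ Icc ((s - δ) / ‖u‖) ((s + δ) / ‖u‖)} := by
        refine measure_mono fun x ⟨hx, hxu⟩ => ⟨hx, ?_⟩
        rw [real_inner_smul_left, mem_Icc, ← div_eq_inv_mul, div_le_div_iff_of_pos_right hu',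
          div_le_div_iff_of_pos_right hu']
        constructor <;> linarith [abs_le.mp hxu]
    _ ≤ ENNReal.ofReal (2 * δ / ‖u‖) * ENNReal.ofReal (2 * R) ^ n := by
        convert volume_inter_ball_le_of_inner_mem_Icc hn he x0 R _ _ using 3
        ring

theorem volume_sublevel_affine_inter_ball_le {n : ℕ} (hn : finrank ℝ E = n + 1) (A : E →L[ℝ] F)
    (b : F) {x0 xs : E} {R ε : ℝ} (hxs : xs ∈ closedBall x0 R) (hfxs : A xs + b ≠ 0)
    (hε0 : 0 ≤ ε) (hε1 : ε < 1) :
    volume {x ∈ ball x0 R | ‖A x + b‖ ≤ ε * ‖A xs + b‖} ≤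
      ENNReal.ofReal (4 * ε * R / (1 - ε)) * ENNReal.ofReal (2 * R) ^ n := by
  set M := ‖A xs + b‖
  have hM : 0 < M := norm_pos_iff.mpr hfxs
  rcases eq_empty_or_nonempty {x ∈ ball x0 R | ‖A x + b‖ ≤ ε * M} with hS | ⟨x1, hx1, hfx1⟩
  · simp only [hS, measure_empty, zero_le]
  -- Pairing with the unit vector `v` along `A xs + b` gives the real affine map `⟪u, ·⟫ + ⟪v, b⟫`,
  -- equal to `M` at `xs` and at most `ε M` in absolute value on the sublevel set: the sublevel set
  -- lies in a slab, and `‖u‖ ≥ M (1 - ε) / (2 R)` bounds its width.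
  set v : F := M⁻¹ • (A xs + b)
  set u : E := A.adjoint v
  have hv : ‖v‖ = 1 := by
    rw [norm_smul, norm_inv, Real.norm_of_nonneg hM.le]
    exact inv_mul_cancel₀ hM.ne'
  have hinner (x : E) : ⟪u, x⟫ + ⟪v, b⟫ = ⟪v, A x + b⟫ := by
    rw [ContinuousLinearMap.adjoint_inner_left, inner_add_right]
  have hinner_le (x : E) : |⟪v, A x + b⟫| ≤ ‖A x + b‖ := by
    simpa [hv] using abs_real_inner_le_norm v (A x + b)
  have hu : M * (1 - ε) ≤ ‖u‖ * (2 * R) := by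
    have hxs_val : ⟪v, A xs + b⟫ = M := by
      rw [real_inner_smul_left, real_inner_self_eq_norm_mul_norm, ← mul_assoc,
        inv_mul_cancel₀ hM.ne', one_mul]
    have hdist : ‖xs - x1‖ ≤ 2 * R := by
      rw [← dist_eq_norm]
      linarith [dist_triangle_right xs x1 x0, mem_closedBall.mp hxs, (mem_ball.mp hx1).le]
    calc M * (1 - ε) ≤ ⟪v, A xs + b⟫ - ⟪v, A x1 + b⟫ := by
          linarith [le_abs_self ⟪v, A x1 + b⟫, hinner_le x1]
      _ = ⟪u, xs - x1⟫ := by rw [← hinner, ← hinner, inner_sub_right]; ring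
      _ ≤ ‖u‖ * ‖xs - x1‖ := real_inner_le_norm u _
      _ ≤ ‖u‖ * (2 * R) := by gcongr
  have hu0 : 0 < ‖u‖ := by
    by_contra! h
    nlinarith [mul_pos hM (sub_pos.mpr hε1), pos_of_mem_ball hx1]
  calc volume {x ∈ ball x0 R | ‖A x + b‖ ≤ ε * M}
      ≤ volume {x ∈ ball x0 R | |⟪u, x⟫ - -⟪v, b⟫| ≤ ε * M} := by
        refine measure_mono fun x ⟨hx, hfx⟩ => ⟨hx, ?_⟩
        rw [sub_neg_eq_add, hinner]
        exact (hinner_le x).trans hfx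
    _ ≤ ENNReal.ofReal (2 * (ε * M) / ‖u‖) * ENNReal.ofReal (2 * R) ^ n :=
        volume_slab_inter_ball_le hn (norm_pos_iff.mp hu0) x0 R _ _
    _ ≤ ENNReal.ofReal (4 * ε * R / (1 - ε)) * ENNReal.ofReal (2 * R) ^ n := by
        gcongr ENNReal.ofReal ?_ * _
        rw [div_le_div_iff₀ hu0 (sub_pos.mpr hε1)]
        nlinarith [mul_le_mul_of_nonneg_left hu (by positivity : (0 : ℝ) ≤ 2 * ε)]

end Slab

theorem sqrt_pi_mul_rpow_two_div {R : ℝ} (hR : 0 ≤ R) (p : ℝ) :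
    (√π * R) ^ (2 / p) = (π * R ^ 2) ^ (1 / p) := by
  rw [div_eq_mul_one_div 2 p, rpow_mul (by positivity), rpow_two, mul_pow, sq_sqrt pi_nonneg]

theorem ofReal_sqrt_pi_mul_rpow_eq_volume_ball_rpow (x0 : E2) {R p : ℝ} (hR : 0 ≤ R)
    (hp : 0 < p) :
    ENNReal.ofReal ((√π * R) ^ (2 / p)) = volume (ball x0 R) ^ (1 / p) := by
  rw [sqrt_pi_mul_rpow_two_div hR, ← ENNReal.ofReal_rpow_of_nonneg (by positivity) (by positivity),
    EuclideanSpace.volume_ball_fin_two, ENNReal.ofReal_mul pi_nonneg, ENNReal.ofReal_pow hR,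
    mul_comm]

theorem eLpNorm_restrict_ball_le_mul_eLpNorm_top {G : Type*} [NormedAddCommGroup G] {f : E2 → G}
    (x0 : E2) {R p : ℝ} (hR : 0 ≤ R) (hp : 0 < p)
    (hf : AEStronglyMeasurable f (volume.restrict (ball x0 R))) :
    eLpNorm f (ENNReal.ofReal p) (volume.restrict (ball x0 R)) ≤
      ENNReal.ofReal ((√π * R) ^ (2 / p)) * eLpNorm f ⊤ (volume.restrict (ball x0 R)) := by
  have h := eLpNorm_le_eLpNorm_mul_rpow_measure_univ (p := ENNReal.ofReal p) le_top hf
  rwa [Measure.restrict_apply_univ, ENNReal.toReal_ofReal hp.le, ENNReal.toReal_top, div_zero,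
    sub_zero, mul_comm, ← ofReal_sqrt_pi_mul_rpow_eq_volume_ball_rpow x0 hR hp] at h

theorem inv_le_rpow_neg_mul_sqrt_pi_mul_rpow {R p : ℝ} (hR : 0 < R) (hp : 0 < p) :
    R⁻¹ ≤ R ^ (-(2 / p + 1)) * (√π * R) ^ (2 / p) := by
  have hπ : 1 ≤ √π ^ (2 / p) :=
    one_le_rpow (one_le_sqrt.mpr (by linarith [pi_gt_three])) (by positivity)
  calc R⁻¹ ≤ √π ^ (2 / p) * R ^ (-(2 / p + 1) + 2 / p) := by
        rw [show -(2 / p + 1) + 2 / p = -1 by ring, rpow_neg_one]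
        exact le_mul_of_one_le_left (by positivity) hπ
    _ = R ^ (-(2 / p + 1)) * (√π * R) ^ (2 / p) := by
        rw [rpow_add hR, mul_rpow (by positivity) hR.le]; ring

theorem le_volume_superlevel_affine {θ ε R : ℝ} {x0 xs : E2} {U : Set E2} (A : E2 →L[ℝ] F)
    (b : F) (hU : U ⊆ ball x0 R) (hUvol : ENNReal.ofReal θ * volume (ball x0 R) ≤ volume U)
    (hxs : xs ∈ closedBall x0 R) (hfxs : A xs + b ≠ 0) (hε0 : 0 ≤ ε) (hε1 : ε ≤ 1 / 2)
    (hεθ : 32 * ε ≤ θ * π) :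
    ENNReal.ofReal (θ * π * R ^ 2 / 2) ≤ volume {x ∈ U | ε * ‖A xs + b‖ ≤ ‖A x + b‖} := by
  have hR : 0 ≤ R := dist_nonneg.trans hxs
  have hθ : 0 ≤ θ := by nlinarith [pi_pos]
  set S := {x ∈ ball x0 R | ‖A x + b‖ ≤ ε * ‖A xs + b‖}
  have hS : volume S ≤ ENNReal.ofReal (θ * π * R ^ 2 / 2) := by
    refine (volume_sublevel_affine_inter_ball_le (n := 1) finrank_euclideanSpace_fin A b hxs hfxs
      hε0 (by linarith)).trans ?_
    rw [pow_one, ← ENNReal.ofReal_mul (div_nonneg (by positivity) (by linarith))]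
    refine ENNReal.ofReal_le_ofReal ?_
    rw [div_mul_eq_mul_div, div_le_iff₀ (by linarith)]
    nlinarith [mul_nonneg hε0 (sq_nonneg R), mul_le_mul_of_nonneg_right hεθ (sq_nonneg R)]
  have hsplit : U ⊆ {x ∈ U | ε * ‖A xs + b‖ ≤ ‖A x + b‖} ∪ S := fun x hx =>
    (le_or_gt (ε * ‖A xs + b‖) ‖A x + b‖).imp (fun h => ⟨hx, h⟩) (fun h => ⟨hU hx, h.le⟩)
  refine (ENNReal.add_le_add_iff_right (ENNReal.ofReal_ne_top (r := θ * π * R ^ 2 / 2))).mp ?_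
  calc ENNReal.ofReal (θ * π * R ^ 2 / 2) + ENNReal.ofReal (θ * π * R ^ 2 / 2)
      = ENNReal.ofReal θ * volume (ball x0 R) := by
        rw [EuclideanSpace.volume_ball_fin_two,
          ← ENNReal.ofReal_add (by positivity) (by positivity), ← ENNReal.ofReal_pow hR, ← ENNReal.ofReal_mul (by positivity), ← ENNReal.ofReal_mul hθ]
        ring_nf
    _ ≤ volume U := hUvol
    _ ≤ volume {x ∈ U | ε * ‖A xs + b‖ ≤ ‖A x + b‖} + volume S :=
        (measure_mono hsplit).trans (measure_union_le _ _)
    _ ≤ volume {x ∈ U | ε * ‖A xs + b‖ ≤ ‖A x + b‖} + ENNReal.ofReal (θ * π * R ^ 2 / 2) := by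
        gcongr

theorem ofReal_mul_sqrt_pi_mul_rpow_le_eLpNorm_restrict {θ ε R p : ℝ} {x0 xs : E2} {U : Set E2}
    (A : E2 →L[ℝ] F) (b : F) (hU : U ⊆ ball x0 R)
    (hUvol : ENNReal.ofReal θ * volume (ball x0 R) ≤ volume U) (hxs : xs ∈ closedBall x0 R)
    (hε0 : 0 < ε) (hε1 : ε ≤ 1 / 2) (hεθ : 32 * ε ≤ θ * π) (hp : 0 < p) :
    ENNReal.ofReal (‖A xs + b‖ * (√π * R) ^ (2 / p)) ≤
      ENNReal.ofReal (ε⁻¹ * (2 / θ) ^ (1 / p)) *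
        eLpNorm (fun x => A x + b) (ENNReal.ofReal p) (volume.restrict U) := by
  rcases eq_or_ne (A xs + b) 0 with hfxs | hfxs
  · simp [hfxs]
  have hR : 0 ≤ R := dist_nonneg.trans hxs
  have hθ : 0 < θ := by nlinarith [pi_pos]
  set t := ENNReal.ofReal (ε * ‖A xs + b‖)
  have hreal : ‖A xs + b‖ * (√π * R) ^ (2 / p) =
      ε⁻¹ * (2 / θ) ^ (1 / p) * (ε * ‖A xs + b‖ * (θ * π * R ^ 2 / 2) ^ (1 / p)) := by
    rw [sqrt_pi_mul_rpow_two_div hR, show π * R ^ 2 = 2 / θ * (θ * π * R ^ 2 / 2) by field_simp,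
      mul_rpow (by positivity) (by positivity)]
    field_simp
  have hsuper : ENNReal.ofReal (θ * π * R ^ 2 / 2) ≤ volume.restrict U {x | t ≤ ‖A x + b‖ₑ} :=
    calc ENNReal.ofReal (θ * π * R ^ 2 / 2)
        ≤ volume {x ∈ U | ε * ‖A xs + b‖ ≤ ‖A x + b‖} :=
          le_volume_superlevel_affine A b hU hUvol hxs hfxs hε0.le hε1 hεθ
      _ ≤ volume ({x | t ≤ ‖A x + b‖ₑ} ∩ U) := measure_mono fun x ⟨hxU, hx⟩ =>
          ⟨show t ≤ _ by rw [← ofReal_norm]; exact ENNReal.ofReal_le_ofReal hx, hxU⟩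
      _ ≤ volume.restrict U {x | t ≤ ‖A x + b‖ₑ} := Measure.le_restrict_apply _ _
  have hcheb := mul_meas_ge_rpow_le_eLpNorm (volume.restrict U) (by simpa using hp)
    ENNReal.ofReal_ne_top (by fun_prop : Continuous fun x => A x + b).aestronglyMeasurable t
  rw [ENNReal.toReal_ofReal hp.le] at hcheb
  calc ENNReal.ofReal (‖A xs + b‖ * (√π * R) ^ (2 / p))
      = ENNReal.ofReal (ε⁻¹ * (2 / θ) ^ (1 / p)) *
          (t * ENNReal.ofReal (θ * π * R ^ 2 / 2) ^ (1 / p)) := by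
        rw [hreal, ENNReal.ofReal_mul (by positivity : (0 : ℝ) ≤ ε⁻¹ * (2 / θ) ^ (1 / p)),
          ENNReal.ofReal_mul (by positivity : (0 : ℝ) ≤ ε * ‖A xs + b‖),
          ENNReal.ofReal_rpow_of_nonneg (by positivity) (by positivity)]
    _ ≤ ENNReal.ofReal (ε⁻¹ * (2 / θ) ^ (1 / p)) *
          (t * volume.restrict U {x | t ≤ ‖A x + b‖ₑ} ^ (1 / p)) := by gcongr
    _ ≤ _ := by gcongr

/-- `L^p`-bounds for affine maps on a ball in terms of their `L^p`-norm on a subset of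
proportional measure: `‖a‖_{L^p(B(x0,R))} ≤ (√π R)^{2/p} ‖a‖_{L^∞(B(x0,R))} ≤ c ‖a‖_{L^p(U)}`
and `|A| ≤ c R^{-(2/p+1)} ‖a‖_{L^p(U)}`, with `c` depending only on `θ` and `p`. -/
theorem rigid_motion_lp_bounds (θ p : ℝ) (hθ : 0 < θ) (hp : 1 ≤ p) :
    ∃ c : ℝ, 0 < c ∧
      ∀ (x0 : E2) (R : ℝ) (A : E2 →L[ℝ] E2) (b : E2) (U : Set E2),
        0 < R → U ⊆ ball x0 R → MeasurableSet U →
        ENNReal.ofReal θ * volume (ball x0 R) ≤ volume U →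
        eLpNorm (fun x => A x + b) (ENNReal.ofReal p) (volume.restrict (ball x0 R)) ≤
            ENNReal.ofReal ((Real.sqrt Real.pi * R) ^ (2 / p)) *
              eLpNorm (fun x => A x + b) ⊤ (volume.restrict (ball x0 R)) ∧
        ENNReal.ofReal ((Real.sqrt Real.pi * R) ^ (2 / p)) *
            eLpNorm (fun x => A x + b) ⊤ (volume.restrict (ball x0 R)) ≤
          ENNReal.ofReal c *
            eLpNorm (fun x => A x + b) (ENNReal.ofReal p) (volume.restrict U) ∧
        ENNReal.ofReal ‖A‖ ≤
          ENNReal.ofReal (c * R ^ (-(2 / p + 1))) *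
            eLpNorm (fun x => A x + b) (ENNReal.ofReal p) (volume.restrict U) := by
  have hp0 : 0 < p := by linarith
  obtain ⟨ε, hε0, hε1, hεθ⟩ : ∃ ε : ℝ, 0 < ε ∧ ε ≤ 1 / 2 ∧ 32 * ε ≤ θ * π :=
    ⟨min (1 / 2) (θ * π / 32), by positivity, min_le_left _ _,
      by linarith [min_le_right (1 / 2 : ℝ) (θ * π / 32)]⟩
  set c' := ε⁻¹ * (2 / θ) ^ (1 / p)
  refine ⟨2 * c', by positivity, fun x0 R A b U hR hU _ hUvol => ?_⟩
  have hf : Continuous fun x => A x + b := by fun_prop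
  obtain ⟨xs, hxs, hmax⟩ := (isCompact_closedBall x0 R).exists_isMaxOn
    (nonempty_closedBall.mpr hR.le) hf.norm.continuousOn
  set M := ‖A xs + b‖
  set X := (√π * R) ^ (2 / p)
  have hsup : eLpNorm (fun x => A x + b) ⊤ (volume.restrict (ball x0 R)) ≤ ENNReal.ofReal M :=
    eLpNorm_exponent_top.trans_le <| eLpNormEssSup_le_of_ae_bound <|
      ae_restrict_of_forall_mem measurableSet_ball fun x hx => hmax (ball_subset_closedBall hx)
  have hlow := ofReal_mul_sqrt_pi_mul_rpow_le_eLpNorm_restrict A b hU hUvol hxs hε0 hε1 hεθ hp0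
  have hA : ‖A‖ ≤ 2 * R ^ (-(2 / p + 1)) * (M * X) :=
    calc ‖A‖ ≤ 2 * M * R⁻¹ := by
          rw [← div_eq_mul_inv]; exact A.opNorm_le_of_norm_add_le_on_closedBall b hR hmax
      _ ≤ 2 * M * (R ^ (-(2 / p + 1)) * X) := by
          gcongr; exact inv_le_rpow_neg_mul_sqrt_pi_mul_rpow hR hp0
      _ = 2 * R ^ (-(2 / p + 1)) * (M * X) := by ring
  refine ⟨eLpNorm_restrict_ball_le_mul_eLpNorm_top x0 hR.le hp0 hf.aestronglyMeasurable, ?_, ?_⟩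
  · calc ENNReal.ofReal X * eLpNorm (fun x => A x + b) ⊤ _
        ≤ ENNReal.ofReal (M * X) := by
          rw [mul_comm M, ENNReal.ofReal_mul (by positivity)]; gcongr
      _ ≤ ENNReal.ofReal c' * _ := hlow
      _ ≤ ENNReal.ofReal (2 * c') * _ := by gcongr; linarith [show 0 ≤ c' by positivity]
  · calc ENNReal.ofReal ‖A‖
        ≤ ENNReal.ofReal (2 * R ^ (-(2 / p + 1))) * ENNReal.ofReal (M * X) := by
          rw [← ENNReal.ofReal_mul (by positivity)]; exact ENNReal.ofReal_le_ofReal hA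
      _ ≤ ENNReal.ofReal (2 * R ^ (-(2 / p + 1))) * (ENNReal.ofReal c' * _) := by gcongr
      _ = ENNReal.ofReal (2 * c' * R ^ (-(2 / p + 1))) * _ := by
          rw [← mul_assoc, ← ENNReal.ofReal_mul (by positivity)]; ring_nf
end
end

section
/- Let K be a relatively closed subset of B(x0,r0) that separates B(x0,r0) (i.e., β_K(x0,r0) ≤ 1/2 and the two regions D⁺ and D⁻ of points at distance > β_K(x0,r0)·r0 above/below an optimal approximating line lie in distinct connected components of B(x0,r0)\K). Then the bilateral flatness satisfies β^bil_K(x0,r0) ≤ 4 β_K(x0,r0). -/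
open Metric Set MeasureTheory

noncomputable section

/-- The affine line through `x` with direction `v`. -/
def lineThrough (x v : E2) : Set E2 := {p | ∃ t : ℝ, p = x + t • v}

/-- The (unilateral) flatness `β_K(x0, r0)`: the infimum of all `ε ≥ 0` such that
`K ∩ B(x0,r0)` is contained in a strip of half-width `ε · r0` around some line through `x0`. -/
noncomputable def flatness (K : Set E2) (x0 : E2) (r0 : ℝ) : ℝ :=
  sInf {ε : ℝ | 0 ≤ ε ∧ ∃ v : E2, v ≠ 0 ∧
    ∀ y ∈ K ∩ ball x0 r0, infDist y (lineThrough x0 v) ≤ ε * r0}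

/-- The bilateral flatness `β^bil_K(x0, r0)`: the infimum of all `ε ≥ 0` such that for some
line through `x0`, `K ∩ B(x0,r0)` is `ε r0`-close to the line and conversely each point of the
line in the ball is `ε r0`-close to `K`. -/
noncomputable def bilFlatness (K : Set E2) (x0 : E2) (r0 : ℝ) : ℝ :=
  sInf {ε : ℝ | 0 ≤ ε ∧ ∃ v : E2, v ≠ 0 ∧
    (∀ y ∈ K ∩ ball x0 r0, infDist y (lineThrough x0 v) ≤ ε * r0) ∧
    (∀ y ∈ lineThrough x0 v ∩ ball x0 r0, infDist y K ≤ ε * r0)}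

/-- `K` separates `B(x0,r0)`: the flatness is at most `1/2` and, for some unit normal `ν` of an
optimal approximating line, the two regions `D^±` of points of the ball lying at (signed) distance
more than `β_K(x0,r0)·r0` from the line on each side cannot be joined by a connected subset of
`B(x0,r0) \ K`, i.e. they lie in distinct connected components of `B(x0,r0) \ K`. -/
def Separates (K : Set E2) (x0 : E2) (r0 : ℝ) : Prop :=
  flatness K x0 r0 ≤ 1 / 2 ∧
  ∃ ν : E2, ‖ν‖ = 1 ∧
    (∀ y ∈ K ∩ ball x0 r0, |(inner ℝ (y - x0) ν : ℝ)| ≤ flatness K x0 r0 * r0) ∧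
    ∀ C : Set E2, IsConnected C → C ⊆ ball x0 r0 \ K →
      ¬ ((∃ p ∈ C, flatness K x0 r0 * r0 < (inner ℝ (p - x0) ν : ℝ)) ∧
         (∃ q ∈ C, (inner ℝ (q - x0) ν : ℝ) < -(flatness K x0 r0 * r0)))

/-- `A` is relatively closed in `B`. -/
def RelClosedIn (A B : Set E2) : Prop := A ⊆ B ∧ closure A ∩ B ⊆ A

/-!
Let `ν` be the unit normal of the separating strip of half-width `b = β r0` and `ℓ` the line
through `x0` orthogonal to `ν`. Points of `K ∩ B` lie in the strip, hence within `b` of `ℓ`.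
Conversely, move a point `y ∈ ℓ ∩ B` towards `x0` by at most `b`, to a point `z` with
`|z - x0|² + b² < r0²`. The segment through `z` in direction `ν` of half-length slightly larger
than `b` then stays in `B` and joins `D⁺` to `D⁻`, so it meets `K`. Hence `dist(y, K) ≤ 2b`, and
in fact `β^bil ≤ 2β`.
-/

open scoped RealInnerProductSpace EuclideanSpace

lemma exists_mem_segment_dist_le_of_dist_lt {E : Type*} [NormedAddCommGroup E]
    [NormedSpace ℝ E] {x0 y : E} {r b : ℝ} (hy : dist y x0 < r) (hb : 0 ≤ b) (hbr : b < r) :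
    ∃ z ∈ segment ℝ y x0, dist y z ≤ b ∧ dist z x0 ^ 2 + b ^ 2 < r ^ 2 := by
  set a := dist y x0
  rcases le_or_gt a b with hab | hba
  · refine ⟨x0, right_mem_segment ℝ y x0, hab, ?_⟩
    rw [dist_self]
    nlinarith
  · have ha : 0 < a := hb.trans_lt hba
    have hc : b / a ∈ Icc (0 : ℝ) 1 := ⟨by positivity, (div_le_one ha).2 hba.le⟩
    refine ⟨AffineMap.lineMap y x0 (b / a), lineMap_mem_segment ℝ y x0 hc, ?_, ?_⟩
    · rw [dist_comm, dist_lineMap_left, Real.norm_of_nonneg hc.1, div_mul_cancel₀ b ha.ne']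
    · rw [dist_lineMap_right, Real.norm_of_nonneg (sub_nonneg.2 hc.2), sub_mul, one_mul,
        div_mul_cancel₀ b ha.ne']
      -- `(a - b)² + b² = a² - 2b(a - b) ≤ a²`
      nlinarith

section InnerProductSpace

variable {F : Type*} [NormedAddCommGroup F] [InnerProductSpace ℝ F]

def SeparatesStrip (K : Set F) (x0 ν : F) (r b : ℝ) : Prop :=
  ∀ C : Set F, IsConnected C → C ⊆ ball x0 r \ K →
    ¬((∃ p ∈ C, b < ⟪p - x0, ν⟫) ∧ ∃ q ∈ C, ⟪q - x0, ν⟫ < -b)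

lemma norm_add_smul_sub_sq_of_inner_eq_zero {x0 z ν : F} (hν : ‖ν‖ = 1)
    (hz : ⟪z - x0, ν⟫ = 0) (s : ℝ) : ‖z + s • ν - x0‖ ^ 2 = ‖z - x0‖ ^ 2 + s ^ 2 := by
  rw [add_sub_right_comm, norm_add_sq_real, real_inner_smul_right, hz, norm_smul, hν,
    mul_one, Real.norm_eq_abs, sq_abs]
  ring

lemma inner_add_smul_sub_of_inner_eq_zero {x0 z ν : F} (hν : ‖ν‖ = 1)
    (hz : ⟪z - x0, ν⟫ = 0) (s : ℝ) : ⟪z + s • ν - x0, ν⟫ = s := by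
  rw [add_sub_right_comm, inner_add_left, hz, real_inner_smul_left, real_inner_self_eq_norm_sq,
    hν]
  ring

lemma segment_subset_closedBall_of_norm_eq_one {z ν : F} (hν : ‖ν‖ = 1) {t : ℝ} (ht : 0 ≤ t) :
    segment ℝ (z + (-t) • ν) (z + t • ν) ⊆ closedBall z t := by
  have hend : ∀ s : ℝ, |s| ≤ t → z + s • ν ∈ closedBall z t := fun s hs => by
    rwa [mem_closedBall, dist_eq_norm, add_sub_cancel_left, norm_smul, hν, mul_one,
      Real.norm_eq_abs]
  exact (convex_closedBall z t).segment_subset (hend _ (by rw [abs_neg, abs_of_nonneg ht]))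
    (hend _ (abs_of_nonneg ht).le)

lemma segment_subset_ball_of_inner_eq_zero {x0 z ν : F} (hν : ‖ν‖ = 1) (hz : ⟪z - x0, ν⟫ = 0)
    {r t : ℝ} (hr : 0 ≤ r) (hzt : ‖z - x0‖ ^ 2 + t ^ 2 < r ^ 2) :
    segment ℝ (z + (-t) • ν) (z + t • ν) ⊆ ball x0 r := by
  have hend : ∀ s : ℝ, s ^ 2 = t ^ 2 → z + s • ν ∈ ball x0 r := fun s hs => by
    rwa [mem_ball, dist_eq_norm, ← sq_lt_sq₀ (norm_nonneg _) hr,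
      norm_add_smul_sub_sq_of_inner_eq_zero hν hz, hs]
  exact (convex_ball x0 r).segment_subset (hend _ (neg_sq t)) (hend _ rfl)

namespace SeparatesStrip

variable {K : Set F} {x0 ν : F} {r b : ℝ}

lemma exists_mem_closedBall (hsep : SeparatesStrip K x0 ν r b) (hν : ‖ν‖ = 1) {z : F}
    (hz : ⟪z - x0, ν⟫ = 0) (hr : 0 ≤ r) (hb : 0 ≤ b) {t : ℝ} (hbt : b < t)
    (hzt : ‖z - x0‖ ^ 2 + t ^ 2 < r ^ 2) : ∃ k ∈ K, dist z k ≤ t := by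
  by_contra! hK
  set C := segment ℝ (z + (-t) • ν) (z + t • ν)
  have hC : C ⊆ ball x0 r \ K := fun w hw =>
    ⟨segment_subset_ball_of_inner_eq_zero hν hz hr hzt hw, fun hwK =>
      (hK w hwK).not_ge (dist_comm z w ▸
        segment_subset_closedBall_of_norm_eq_one hν (hb.trans hbt.le) hw)⟩
  refine hsep C ((convex_segment _ _).isConnected ⟨_, left_mem_segment ℝ _ _⟩) hC
    ⟨⟨_, right_mem_segment ℝ _ _, ?_⟩, ⟨_, left_mem_segment ℝ _ _, ?_⟩⟩
  · rwa [inner_add_smul_sub_of_inner_eq_zero hν hz]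
  · rw [inner_add_smul_sub_of_inner_eq_zero hν hz]
    linarith

lemma infDist_le (hsep : SeparatesStrip K x0 ν r b) (hν : ‖ν‖ = 1) {z : F}
    (hz : ⟪z - x0, ν⟫ = 0) (hr : 0 ≤ r) (hb : 0 ≤ b) (hzb : ‖z - x0‖ ^ 2 + b ^ 2 < r ^ 2) :
    infDist z K ≤ b := by
  set T := √(r ^ 2 - ‖z - x0‖ ^ 2)
  have hbT : b < T := Real.lt_sqrt_of_sq_lt (by linarith)
  refine le_of_forall_gt fun s hs => ?_
  obtain ⟨t, hbt, hts⟩ := exists_between (lt_min hs hbT)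
  have hzt : ‖z - x0‖ ^ 2 + t ^ 2 < r ^ 2 := by
    have := (Real.lt_sqrt (hb.trans hbt.le)).1 (hts.trans_le (min_le_right _ _))
    linarith
  obtain ⟨k, hk, hzk⟩ := hsep.exists_mem_closedBall hν hz hr hb hbt hzt
  exact (infDist_le_dist_of_mem hk).trans_lt (hzk.trans_lt (hts.trans_le (min_le_left _ _)))

lemma infDist_le_two_mul (hsep : SeparatesStrip K x0 ν r b) (hν : ‖ν‖ = 1) {y : F}
    (hy : ⟪y - x0, ν⟫ = 0) (hyr : dist y x0 < r) (hb : 0 ≤ b) (hbr : b < r) :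
    infDist y K ≤ 2 * b := by
  obtain ⟨z, hzy, hyz, hzr⟩ := exists_mem_segment_dist_le_of_dist_lt hyr hb hbr
  have hz : ⟪z - x0, ν⟫ = 0 := by
    obtain ⟨θ, -, rfl⟩ := segment_eq_image' ℝ y x0 ▸ hzy
    rw [show y + θ • (x0 - y) - x0 = (1 - θ) • (y - x0) by module, real_inner_smul_left, hy,
      mul_zero]
  calc infDist y K ≤ infDist z K + dist y z := infDist_le_infDist_add_dist
    _ ≤ b + b := add_le_add (hsep.infDist_le hν hz (hb.trans hbr.le) hb
        (by rwa [← dist_eq_norm])) hyz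
    _ = 2 * b := by ring

end SeparatesStrip

end InnerProductSpace

lemma Orientation.exists_eq_inner_smul_add_smul_rightAngleRotation {V : Type*}
    [NormedAddCommGroup V] [InnerProductSpace ℝ V] [Fact (Module.finrank ℝ V = 2)]
    (o : Orientation ℝ V (Fin 2)) {ν : V} (hν : ‖ν‖ = 1) (w : V) :
    ∃ s : ℝ, w = ⟪w, ν⟫ • ν + s • o.rightAngleRotation ν := by
  have horth : ⟪ν, w - ⟪w, ν⟫ • ν⟫ = 0 := by
    rw [inner_sub_right, real_inner_smul_right, real_inner_self_eq_norm_sq, hν, real_inner_comm]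
    ring
  rcases o.inner_eq_zero_iff_eq_zero_or_eq_smul_rotation_pi_div_two.1 horth with h | ⟨s, hs⟩
  · exact absurd hν (by simp [h])
  · refine ⟨s, ?_⟩
    rw [← o.rotation_pi_div_two, hs]
    abel

lemma inner_sub_eq_zero_of_mem_lineThrough (o : Orientation ℝ E2 (Fin 2)) {x0 ν p : E2}
    (hp : p ∈ lineThrough x0 (o.rightAngleRotation ν)) : ⟪p - x0, ν⟫ = 0 := by
  obtain ⟨t, rfl⟩ := hp
  rw [add_sub_cancel_left, real_inner_smul_left, o.inner_rightAngleRotation_self, mul_zero]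

lemma infDist_lineThrough_le (o : Orientation ℝ E2 (Fin 2)) {ν : E2} (hν : ‖ν‖ = 1)
    (x0 y : E2) : infDist y (lineThrough x0 (o.rightAngleRotation ν)) ≤ |⟪y - x0, ν⟫| := by
  obtain ⟨s, hs⟩ := o.exists_eq_inner_smul_add_smul_rightAngleRotation hν (y - x0)
  calc infDist y (lineThrough x0 (o.rightAngleRotation ν))
      ≤ dist y (x0 + s • o.rightAngleRotation ν) := infDist_le_dist_of_mem ⟨s, rfl⟩
    _ = ‖⟪y - x0, ν⟫ • ν‖ := by rw [dist_eq_norm, sub_add_eq_sub_sub, sub_eq_iff_eq_add.2 hs]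
    _ = |⟪y - x0, ν⟫| := by rw [norm_smul, hν, mul_one, Real.norm_eq_abs]

lemma flatness_nonneg (K : Set E2) (x0 : E2) (r0 : ℝ) : 0 ≤ flatness K x0 r0 :=
  Real.sInf_nonneg fun _ h => h.1

theorem bilFlatness_le_two_mul_flatness {K : Set E2} {x0 : E2} {r0 : ℝ} (hr0 : 0 < r0)
    (hsep : Separates K x0 r0) : bilFlatness K x0 r0 ≤ 2 * flatness K x0 r0 := by
  obtain ⟨hβ, ν, hν, hstrip, hsepC⟩ := hsep
  set β := flatness K x0 r0
  have hβ0 : 0 ≤ β := flatness_nonneg K x0 r0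
  let o : Orientation ℝ E2 (Fin 2) := (EuclideanSpace.basisFun (Fin 2) ℝ).toBasis.orientation
  refine csInf_le ⟨0, fun _ h => h.1⟩ ⟨by positivity, o.rightAngleRotation ν, ?_,
    fun y hy => ?_, fun y hy => ?_⟩
  · rw [← norm_ne_zero_iff, LinearIsometryEquiv.norm_map, hν]
    exact one_ne_zero
  · calc infDist y (lineThrough x0 (o.rightAngleRotation ν)) ≤ |⟪y - x0, ν⟫| :=
          infDist_lineThrough_le o hν x0 y
      _ ≤ β * r0 := hstrip y hy
      _ ≤ 2 * β * r0 := by nlinarith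
  · rw [mul_assoc]
    exact SeparatesStrip.infDist_le_two_mul hsepC hν
      (inner_sub_eq_zero_of_mem_lineThrough o hy.1) hy.2 (by positivity) (by nlinarith)

theorem bilFlatness_le_of_separates_general (K : Set E2) (x0 : E2) (r0 : ℝ)
    (hr0 : 0 < r0)
    (hsep : Separates K x0 r0) :
    bilFlatness K x0 r0 ≤ 4 * flatness K x0 r0 := by
  linarith [bilFlatness_le_two_mul_flatness hr0 hsep, flatness_nonneg K x0 r0]

/-- For a separating set, the bilateral flatness is controlled by the unilateral flatness:
`β^bil_K(x0,r0) ≤ 4 β_K(x0,r0)`. -/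
theorem bilFlatness_le_of_separates (K : Set E2) (x0 : E2) (r0 : ℝ)
    (hr0 : 0 < r0) (hK : RelClosedIn K (ball x0 r0))
    (hsep : Separates K x0 r0) :
    bilFlatness K x0 r0 ≤ 4 * flatness K x0 r0 :=
  bilFlatness_le_of_separates_general K x0 r0 hr0 hsep
end
end

section
/- Let E be a relatively closed subset of B(x0,r0) containing x0 that separates B(x0,r0), with β_E(x0,r0) ≤ 1/4 for some γ > 0. If x ∈ E ∩ B(x0,r0) and γ > 0 are such that B(x, γ r0) ⊆ B(x0,r0) and β_E(x0,r0) ≤ γ/4, then E still separates B(x, γ r0). -/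
open Metric Set MeasureTheory

noncomputable section

/-! The optimal line for `E` at scale `r0` passes within `β r0` of `x` (`β := β_E(x0,r0)`), so
`E ∩ B(x, γ r0)` lies in a strip of half-width `2 β r0 ≤ γ r0 / 2` around the parallel line
through `x`; hence `β_E(x, γ r0) ≤ 1/2`, and compactness of the unit circle provides an optimal
normal `ν'` at the smaller scale. If a connected `C ⊆ B(x, γ r0) \ E` met both far sides of the
`ν'`-strip, adding these two half-balls (convex and disjoint from `E`) to `C` would give a connected
subset of `B(x0, r0) \ E` containing `x ± w`, where `w` is a vector of length `< γ r0` along the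
bisector of `ν` and `±ν'`. Both points leave the `ν'`-strip, and they lie on opposite far sides
of the strip at `x0`, contradicting the separation of `B(x0, r0)`. -/

open scoped RealInnerProductSpace

def perp (v : E2) : E2 := !₂[-v 1, v 0]

lemma inner_perp_self (v : E2) : ⟪perp v, v⟫ = 0 := by
  simp [perp, PiLp.inner_apply, Fin.sum_univ_two]; ring

lemma norm_perp (v : E2) : ‖perp v‖ = ‖v‖ := by
  simp [perp, EuclideanSpace.norm_eq, Fin.sum_univ_two, add_comm]

lemma sub_inner_smul_eq_inner_perp_smul {ν : E2} (hν : ‖ν‖ = 1) (z : E2) :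
    z - ⟪z, ν⟫ • ν = ⟪z, perp ν⟫ • perp ν := by
  have hν2 : ν 0 ^ 2 + ν 1 ^ 2 = 1 := by
    simpa [Fin.sum_univ_two, hν] using (EuclideanSpace.real_norm_sq_eq ν).symm
  ext i
  fin_cases i <;> simp [perp, PiLp.inner_apply, Fin.sum_univ_two]
  · linear_combination (-z 0) * hν2
  · linear_combination (-z 1) * hν2

lemma self_mem_lineThrough (x v : E2) : x ∈ lineThrough x v := ⟨0, by simp⟩

lemma abs_inner_le_infDist_lineThrough {v n : E2} (hvn : ⟪v, n⟫ = 0) (hn : ‖n‖ = 1) (x y : E2) :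
    |⟪y - x, n⟫| ≤ infDist y (lineThrough x v) := by
  refine (le_infDist ⟨x, self_mem_lineThrough x v⟩).2 ?_
  rintro _ ⟨t, rfl⟩
  calc |⟪y - x, n⟫| = |⟪y - (x + t • v), n⟫| := by
        rw [sub_add_eq_sub_sub, inner_sub_left _ (t • v), inner_smul_left, hvn, mul_zero, sub_zero]
    _ ≤ ‖y - (x + t • v)‖ * ‖n‖ := abs_real_inner_le_norm _ _
    _ = dist y (x + t • v) := by rw [hn, mul_one, dist_eq_norm]

lemma infDist_lineThrough_perp {ν : E2} (hν : ‖ν‖ = 1) (x y : E2) :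
    infDist y (lineThrough x (perp ν)) = |⟪y - x, ν⟫| := by
  refine le_antisymm ?_ (abs_inner_le_infDist_lineThrough (inner_perp_self ν) hν x y)
  calc infDist y (lineThrough x (perp ν)) ≤ dist y (x + ⟪y - x, perp ν⟫ • perp ν) :=
        infDist_le_dist_of_mem ⟨_, rfl⟩
    _ = ‖⟪y - x, ν⟫ • ν‖ := by
        rw [dist_eq_norm, ← sub_sub, ← sub_inner_smul_eq_inner_perp_smul hν, sub_sub_cancel]
    _ = |⟪y - x, ν⟫| := by rw [norm_smul, hν, mul_one, Real.norm_eq_abs]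

lemma flatness_le_of_abs_inner_le {K : Set E2} {x ν : E2} {ρ ε : ℝ} (hν : ‖ν‖ = 1) (hε : 0 ≤ ε)
    (h : ∀ y ∈ K ∩ ball x ρ, |⟪y - x, ν⟫| ≤ ε * ρ) : flatness K x ρ ≤ ε := by
  refine csInf_le ⟨0, fun _ hε => hε.1⟩ ⟨hε, perp ν, ?_, fun y hy => ?_⟩
  · rw [← norm_ne_zero_iff, norm_perp, hν]
    exact one_ne_zero
  · rw [infDist_lineThrough_perp hν]
    exact h y hy

lemma exists_unit_abs_inner_le_of_infDist_le {K : Set E2} {x v : E2} {c : ℝ} (hv : v ≠ 0)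
    (h : ∀ y ∈ K, infDist y (lineThrough x v) ≤ c) :
    ∃ n : E2, ‖n‖ = 1 ∧ ∀ y ∈ K, |⟪y - x, n⟫| ≤ c := by
  have hn : ‖‖v‖⁻¹ • perp v‖ = 1 := by
    rw [norm_smul, norm_inv, norm_norm, norm_perp, inv_mul_cancel₀ (norm_ne_zero_iff.2 hv)]
  refine ⟨‖v‖⁻¹ • perp v, hn, fun y hy => le_trans ?_ (h y hy)⟩
  refine abs_inner_le_infDist_lineThrough ?_ hn x y
  rw [inner_smul_right, real_inner_comm, inner_perp_self, mul_zero]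

lemma exists_unit_abs_inner_le_flatness (K : Set E2) (x : E2) (ρ : ℝ) :
    ∃ ν : E2, ‖ν‖ = 1 ∧ ∀ y ∈ K ∩ ball x ρ, |⟪y - x, ν⟫| ≤ flatness K x ρ * ρ := by
  obtain ⟨ε, -, hε, hεmem⟩ := exists_seq_tendsto_sInf (S := {ε : ℝ | 0 ≤ ε ∧ ∃ v : E2, v ≠ 0 ∧
      ∀ y ∈ K ∩ ball x ρ, infDist y (lineThrough x v) ≤ ε * ρ})
    ⟨1, zero_le_one, EuclideanSpace.single 0 1, by simp, fun y hy =>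
      (infDist_le_dist_of_mem (self_mem_lineThrough _ _)).trans
        (by simpa using (mem_ball.1 hy.2).le)⟩
    ⟨0, fun _ hε => hε.1⟩
  choose v hv hvK using fun k => (hεmem k).2
  choose n hn hnK using fun k => exists_unit_abs_inner_le_of_infDist_le (hv k) (hvK k)
  obtain ⟨ν, hν, φ, hφ, hlim⟩ :=
    (isCompact_sphere (0 : E2) 1).tendsto_subseq fun k => mem_sphere_zero_iff_norm.2 (hn k)
  refine ⟨ν, mem_sphere_zero_iff_norm.1 hν, fun y hy => ?_⟩
  have hcont : Continuous fun m : E2 => |⟪y - x, m⟫| := by fun_prop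
  exact le_of_tendsto_of_tendsto' (hcont.tendsto ν |>.comp hlim)
    ((hε.comp hφ.tendsto_atTop).mul_const ρ) fun k => hnK (φ k) y hy

section InnerProductSpace

variable {F : Type*} [NormedAddCommGroup F] [InnerProductSpace ℝ F]

lemma convex_setOf_lt_inner_sub (x n : F) (t : ℝ) : Convex ℝ {y : F | t < ⟪y - x, n⟫} := by
  simp_rw [inner_sub_left, lt_sub_iff_add_lt]
  exact convex_halfSpace_gt
    ⟨fun a b => inner_add_left a b n, fun c a => real_inner_smul_left a n c⟩ _

lemma exists_norm_lt_and_half_lt_inner {ν ν' : F} (hν : ‖ν‖ = 1) (hν' : ‖ν'‖ = 1) {ρ : ℝ}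
    (hρ : 0 < ρ) : ∃ w : F, ‖w‖ < ρ ∧ ρ / 2 < ⟪w, ν⟫ ∧ ρ / 2 < |⟪w, ν'⟫| := by
  wlog hc : 0 ≤ ⟪ν, ν'⟫ generalizing ν'
  · obtain ⟨w, hw, hwν, hwν'⟩ := this (ν' := -ν') (by rwa [norm_neg])
      (by rw [inner_neg_right]; linarith)
    exact ⟨w, hw, hwν, by rwa [inner_neg_right, abs_neg] at hwν'⟩
  -- `w` points along the bisector of `ν` and `ν'`, which makes an angle at most `π / 4` with both;
  -- any factor in `(1/2, 1/√2)` would do in place of `3/5`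
  set k := 1 + ⟪ν, ν'⟫
  have hk1 : 1 ≤ k := by linarith
  have hwν : ⟪(3 * ρ / (5 * k)) • (ν + ν'), ν⟫ = 3 * ρ / 5 := by
    rw [real_inner_smul_left, inner_add_left, real_inner_self_eq_norm_sq, hν, real_inner_comm]
    field_simp
    ring
  have hwν' : ⟪(3 * ρ / (5 * k)) • (ν + ν'), ν'⟫ = 3 * ρ / 5 := by
    rw [real_inner_smul_left, inner_add_left, real_inner_self_eq_norm_sq, hν']
    field_simp
    ring
  have hw : ‖(3 * ρ / (5 * k)) • (ν + ν')‖ ^ 2 < ρ ^ 2 := by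
    rw [norm_smul, mul_pow, norm_add_sq_real, hν, hν', Real.norm_eq_abs, sq_abs, div_pow,
      div_mul_eq_mul_div, div_lt_iff₀ (by positivity)]
    have hk18 : 0 < 25 * k - 18 := by linarith
    nlinarith [mul_pos (mul_pos (pow_pos hρ 2) (by linarith : (0 : ℝ) < k)) hk18]
  refine ⟨_, lt_of_pow_lt_pow_left₀ 2 hρ.le hw, by rw [hwν]; linarith, ?_⟩
  rw [hwν', abs_of_pos (by positivity)]
  linarith

end InnerProductSpace

/-- The last clause of `Separates`, for a given normal `ν` and strip half-width `h`. -/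
def SeparatesAlong (K : Set E2) (x : E2) (ρ : ℝ) (ν : E2) (h : ℝ) : Prop :=
  ∀ C : Set E2, IsConnected C → C ⊆ ball x ρ \ K →
    ¬ ((∃ p ∈ C, h < ⟪p - x, ν⟫) ∧ ∃ q ∈ C, ⟪q - x, ν⟫ < -h)

lemma SeparatesAlong.of_ball_subset {K : Set E2} {x0 x ν ν' : E2} {r0 ρ h0 h : ℝ}
    (hsep : SeparatesAlong K x0 r0 ν h0) (hsub : ball x ρ ⊆ ball x0 r0)
    (hν : ‖ν‖ = 1) (hν' : ‖ν'‖ = 1) (hstrip : ∀ y ∈ K ∩ ball x ρ, |⟪y - x, ν'⟫| ≤ h)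
    (hh : h ≤ ρ / 2) (hx : h0 + |⟪x - x0, ν⟫| ≤ ρ / 2) :
    SeparatesAlong K x ρ ν' h := by
  rintro C hC hCK ⟨⟨p, hpC, hp⟩, q, hqC, hq⟩
  set Sp := ball x ρ ∩ {y | h < ⟪y - x, ν'⟫}
  set Sm := ball x ρ ∩ {y | h < ⟪y - x, -ν'⟫}
  have hW : IsPreconnected (C ∪ Sp ∪ Sm) := by
    have hpSp : p ∈ Sp := ⟨(hCK hpC).1, hp⟩
    have hqSm : q ∈ Sm := ⟨(hCK hqC).1, show h < _ by rwa [inner_neg_right, lt_neg]⟩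
    refine (hC.2.union p hpC hpSp ?_).union q (.inl hqC) hqSm ?_
    · exact ((convex_ball x ρ).inter (convex_setOf_lt_inner_sub x ν' h)).isPreconnected
    · exact ((convex_ball x ρ).inter (convex_setOf_lt_inner_sub x (-ν') h)).isPreconnected
  have hWK : C ∪ Sp ∪ Sm ⊆ ball x0 r0 \ K := by
    rintro y ((hy | ⟨hy, hyh⟩) | ⟨hy, hyh⟩)
    · exact ⟨hsub (hCK hy).1, (hCK hy).2⟩
    all_goals
      refine ⟨hsub hy, fun hyK => ?_⟩
      have := abs_le.1 (hstrip y ⟨hyK, hy⟩)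
    · exact this.2.not_gt hyh
    · change h < ⟪y - x, -ν'⟫ at hyh
      rw [inner_neg_right] at hyh
      linarith
  have hW_of_abs : ∀ y ∈ ball x ρ, h < |⟪y - x, ν'⟫| → y ∈ C ∪ Sp ∪ Sm := fun y hy hyh => by
    rcases lt_abs.1 hyh with hyh | hyh
    exacts [.inl (.inr ⟨hy, hyh⟩), .inr ⟨hy, show h < _ by rwa [inner_neg_right]⟩]
  -- the points `x ± w` lie beyond both strips, on opposite sides of the strip at `x0`
  obtain ⟨w, hw, hwν, hwν'⟩ :=
    exists_norm_lt_and_half_lt_inner hν hν' (pos_of_mem_ball (hCK hpC).1)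
  refine hsep _ ⟨⟨p, .inl (.inl hpC)⟩, hW⟩ hWK ⟨⟨x + w, ?_, ?_⟩, x - w, ?_, ?_⟩
  · refine hW_of_abs _ (by rwa [mem_ball, dist_self_add_left]) ?_
    rw [add_sub_cancel_left]
    linarith
  · rw [add_sub_right_comm, inner_add_left]
    linarith [neg_abs_le ⟪x - x0, ν⟫]
  · refine hW_of_abs _ (by rwa [mem_ball, dist_self_sub_left]) ?_
    rw [sub_sub_cancel_left, inner_neg_left, abs_neg]
    linarith
  · rw [sub_right_comm, inner_sub_left]
    linarith [le_abs_self ⟪x - x0, ν⟫]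

theorem separates_smaller_ball_general (E : Set E2) (x0 x : E2) (r0 γ : ℝ)
    (hr0 : 0 < r0) (hγ : 0 < γ)
    (hsep : Separates E x0 r0)
    (hx : x ∈ E ∩ ball x0 r0)
    (hsub : ball x (γ * r0) ⊆ ball x0 r0)
    (hflat : flatness E x0 r0 ≤ γ / 4) :
    Separates E x (γ * r0) := by
  obtain ⟨-, ν, hν, hstrip, hnosplit⟩ := hsep
  have hρ : 0 < γ * r0 := mul_pos hγ hr0
  have hxν : |⟪x - x0, ν⟫| ≤ flatness E x0 r0 * r0 := hstrip x hx
  have hβ : 2 * (flatness E x0 r0 * r0) ≤ γ * r0 / 2 := by nlinarith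
  have hflat' : flatness E x (γ * r0) ≤ 1 / 2 := by
    refine flatness_le_of_abs_inner_le hν (by norm_num) fun y hy => ?_
    calc |⟪y - x, ν⟫| ≤ |⟪y - x0, ν⟫| + |⟪x - x0, ν⟫| := by
          rw [← sub_sub_sub_cancel_right y x x0, inner_sub_left]
          exact abs_sub _ _
      _ ≤ 1 / 2 * (γ * r0) := by linarith [hstrip y ⟨hy.1, hsub hy.2⟩]
  obtain ⟨ν', hν', hstrip'⟩ := exists_unit_abs_inner_le_flatness E x (γ * r0)
  exact ⟨hflat', ν', hν', hstrip', SeparatesAlong.of_ball_subset hnosplit hsub hν hν' hstrip'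
    (by nlinarith) (by linarith)⟩

/-- Separation in smaller balls: if `E` separates `B(x0,r0)`, `x ∈ E ∩ B(x0,r0)`, `γ > 0`,
`B(x, γ r0) ⊆ B(x0, r0)` and `β_E(x0,r0) ≤ γ/4`, then `E` still separates `B(x, γ r0)`. -/
theorem separates_smaller_ball (E : Set E2) (x0 x : E2) (r0 γ : ℝ)
    (hr0 : 0 < r0) (hγ : 0 < γ)
    (hE : RelClosedIn E (ball x0 r0)) (hx0 : x0 ∈ E)
    (hsep : Separates E x0 r0)
    (hx : x ∈ E ∩ ball x0 r0)
    (hsub : ball x (γ * r0) ⊆ ball x0 r0)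
    (hflat : flatness E x0 r0 ≤ γ / 4) :
    Separates E x (γ * r0) :=
  separates_smaller_ball_general E x0 x r0 γ hr0 hγ hsep hx hsub hflat
end
end

section
/- Let x0 ∈ ℝ², r0 > 0 and let E be a relatively closed subset of B(x0,r0) such that x0 ∈ E, β_E(x0,r0) ≤ 1/32, E separates B(x0,r0), and H¹(E) ≤ (2 + 1/8) r0. Then there exists a measurable set Ξ ⊆ (r0/16, r0) with L¹((r0/16, r0) \ Ξ) ≤ r0/4 such that for all ρ ∈ Ξ, the set E ∩ ∂B(x0,ρ) consists of exactly two points whose mutual distance is larger than ρ. -/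
open Metric Set MeasureTheory

noncomputable section

/-!
Let `ν` be the unit normal of an optimal line, `τ` the unit tangent, and `β = β_E(x0,r0)`, so
that `ρ > 2 β r0` for `ρ ∈ (r0/16, r0)`. A point `p` of `E` on the circle `∂B(x0,ρ)` lies in the
strip `|⟪p - x0, ν⟫| ≤ β r0`, so `|⟪p - x0, τ⟫| > ρ/2`: it lies on the positive or on the
negative side. Each of the two open half-circles meets `E`, since otherwise it would be a
connected subset of `B(x0,r0) \ E` joining `D⁺` and `D⁻`. So the image of each of the halves
`E⁺`, `E⁻` under `dist(·, x0)` contains `(r0/16, r0)`, and the coarea inequality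
`L¹(f(A)) + L¹{t : #(A ∩ f⁻¹ t) ≥ 2} ≤ H¹(A)` for 1-Lipschitz `f` bounds the measure of the radii
where a half meets the circle twice by `H¹(E) - 2 · (15/16) r0 ≤ r0/4`. For every other radius
the circle meets `E` in exactly one point `p` on the positive and one point `q` on the negative
side, and `|p - q| ≥ ⟪p - q, τ⟫ > ρ/2 + ρ/2`.
-/

open Real
open scoped ENNReal RealInnerProductSpace EuclideanSpace

section Measure

variable {α : Type*} [MeasurableSpace α] (μ : Measure α)

theorem measure_iUnion_add_measure_iUnion_inter_le_tsum {ι : Type*} [Countable ι]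
    (S : ι → Set α) :
    μ (⋃ i, S i) + μ (⋃ (i) (j) (_ : i ≠ j), S i ∩ S j) ≤ ∑' i, μ (S i) := by
  classical
  set T := fun i => toMeasurable μ (S i)
  have hT : ∀ i, MeasurableSet (T i) := fun i => measurableSet_toMeasurable μ (S i)
  have hU : MeasurableSet (⋃ i, T i) := .iUnion hT
  have hD : MeasurableSet (⋃ (i) (j) (_ : i ≠ j), T i ∩ T j) :=
    .iUnion fun i => .iUnion fun j => .iUnion fun _ => (hT i).inter (hT j)
  have hcount : ∀ x, (⋃ i, T i).indicator 1 x
      + (⋃ (i) (j) (_ : i ≠ j), T i ∩ T j).indicator 1 x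
      ≤ ∑' i, (T i).indicator (1 : α → ℝ≥0∞) x := by
    intro x
    by_cases hx : x ∈ ⋃ (i) (j) (_ : i ≠ j), T i ∩ T j
    · simp only [mem_iUnion, mem_inter_iff] at hx
      obtain ⟨i, j, hij, hi, hj⟩ := hx
      calc _ ≤ (1 : ℝ≥0∞) + 1 :=
            add_le_add (indicator_le_self' (by simp) x) (indicator_le_self' (by simp) x)
        _ = ∑ k ∈ {i, j}, (T k).indicator 1 x := by simp [Finset.sum_pair hij, hi, hj]
        _ ≤ _ := ENNReal.sum_le_tsum _
    · rw [indicator_of_notMem hx, add_zero]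
      by_cases hx' : x ∈ ⋃ i, T i
      · obtain ⟨i, hi⟩ := mem_iUnion.1 hx'
        calc _ ≤ (1 : ℝ≥0∞) := indicator_le_self' (by simp) x
          _ = (T i).indicator 1 x := by simp [hi]
          _ ≤ _ := ENNReal.le_tsum i
      · simp [hx']
  calc μ (⋃ i, S i) + μ (⋃ (i) (j) (_ : i ≠ j), S i ∩ S j)
      ≤ μ (⋃ i, T i) + μ (⋃ (i) (j) (_ : i ≠ j), T i ∩ T j) := by
        gcongr with i i j _ <;> exact subset_toMeasurable μ _
    _ = ∫⁻ x, (⋃ i, T i).indicator 1 x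
          + (⋃ (i) (j) (_ : i ≠ j), T i ∩ T j).indicator 1 x ∂μ := by
        rw [lintegral_add_left (measurable_one.indicator hU), lintegral_indicator_one hU,
          lintegral_indicator_one hD]
    _ ≤ ∫⁻ x, ∑' i, (T i).indicator 1 x ∂μ := lintegral_mono hcount
    _ = ∑' i, μ (S i) := by
        rw [lintegral_tsum fun i => (measurable_one.indicator (hT i)).aemeasurable]
        simp_rw [lintegral_indicator_one (hT _), T, measure_toMeasurable]

theorem measure_inter_add_measure_inter_le {P N : Set α} (hP : MeasurableSet P)
    (hPN : Disjoint P N) (E : Set α) : μ (E ∩ P) + μ (E ∩ N) ≤ μ E :=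
  calc μ (E ∩ P) + μ (E ∩ N) ≤ μ (E ∩ P) + μ (E \ P) := by
        gcongr
        exact fun x hx => ⟨hx.1, hPN.notMem_of_mem_right hx.2⟩
    _ = μ E := measure_inter_add_sdiff E hP

theorem exists_measurableSet_subset_sdiff {I : Set α} (hI : MeasurableSet I) (D : Set α) :
    ∃ Ξ, MeasurableSet Ξ ∧ Ξ ⊆ I \ D ∧ μ (I \ Ξ) ≤ μ D := by
  refine ⟨I \ toMeasurable μ D, hI.diff (measurableSet_toMeasurable μ D),
    sdiff_subset_sdiff_right (subset_toMeasurable μ D), ?_⟩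
  rw [sdiff_sdiff_right_self, ← measure_toMeasurable D]
  exact measure_mono inter_subset_right

end Measure

section Coarea

variable {X Y : Type*} [EMetricSpace X]

def doubleImage (f : X → Y) (A : Set X) (r : ℝ≥0∞) : Set Y :=
  {y | ∃ p ∈ A, ∃ q ∈ A, r < edist p q ∧ f p = y ∧ f q = y}

theorem doubleImage_antitone (f : X → Y) (A : Set X) : Antitone (doubleImage f A) :=
  fun _ _ hrs _ ⟨p, hp, q, hq, hpq, hfp, hfq⟩ => ⟨p, hp, q, hq, hrs.trans_lt hpq, hfp, hfq⟩

theorem doubleImage_zero_eq_iUnion (f : X → Y) (A : Set X) :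
    doubleImage f A 0 = ⋃ n : ℕ, doubleImage f A (n : ℝ≥0∞)⁻¹ := by
  refine Subset.antisymm (fun y ⟨p, hp, q, hq, hpq, hfp, hfq⟩ => ?_)
    (iUnion_subset fun n => doubleImage_antitone f A zero_le)
  obtain ⟨n, hn⟩ := ENNReal.exists_inv_nat_lt hpq.ne'
  exact mem_iUnion.2 ⟨n, p, hp, q, hq, hn, hfp, hfq⟩

theorem eq_of_notMem_doubleImage_zero {f : X → Y} {A : Set X} {y : Y}
    (h : y ∉ doubleImage f A 0) {p q : X} (hp : p ∈ A) (hq : q ∈ A) (hfp : f p = y)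
    (hfq : f q = y) : p = q :=
  by_contra fun hpq => h ⟨p, hp, q, hq, edist_pos.2 hpq, hfp, hfq⟩

variable {f : X → ℝ}

theorem volume_image_inter_le (hf : LipschitzWith 1 f) (A t : Set X) :
    volume (f '' (A ∩ t)) ≤ ⨆ _ : t.Nonempty, ediam t ^ (1 : ℝ) := by
  rcases t.eq_empty_or_nonempty with rfl | ht
  · simp
  calc volume (f '' (A ∩ t)) ≤ ediam (f '' (A ∩ t)) := Real.volume_le_diam _
    _ ≤ ediam (A ∩ t) := by simpa using hf.ediam_image_le (A ∩ t)
    _ ≤ ediam t := ediam_mono inter_subset_right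
    _ ≤ _ := le_iSup_of_le ht (by rw [ENNReal.rpow_one])

theorem volume_image_add_volume_doubleImage_le_tsum (hf : LipschitzWith 1 f) {A : Set X}
    {r : ℝ≥0∞} {t : ℕ → Set X} (hAt : A ⊆ ⋃ n, t n) (htr : ∀ n, ediam (t n) ≤ r) :
    volume (f '' A) + volume (doubleImage f A r) ≤
      ∑' n, ⨆ _ : (t n).Nonempty, ediam (t n) ^ (1 : ℝ) := by
  set S := fun n => f '' (A ∩ t n)
  have himage : f '' A ⊆ ⋃ n, S n := by
    rintro _ ⟨p, hp, rfl⟩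
    obtain ⟨n, hn⟩ := mem_iUnion.1 (hAt hp)
    exact mem_iUnion.2 ⟨n, p, ⟨hp, hn⟩, rfl⟩
  have hdouble : doubleImage f A r ⊆ ⋃ (m) (n) (_ : m ≠ n), S m ∩ S n := by
    rintro y ⟨p, hp, q, hq, hpq, rfl, hfq⟩
    obtain ⟨m, hm⟩ := mem_iUnion.1 (hAt hp)
    obtain ⟨n, hn⟩ := mem_iUnion.1 (hAt hq)
    have hmn : m ≠ n := by
      rintro rfl
      exact ((edist_le_ediam_of_mem hm hn).trans (htr m)).not_gt hpq
    exact mem_iUnion₂.2 ⟨m, n, mem_iUnion.2 ⟨hmn, ⟨p, ⟨hp, hm⟩, rfl⟩, ⟨q, ⟨hq, hn⟩, hfq⟩⟩⟩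
  calc volume (f '' A) + volume (doubleImage f A r)
      ≤ volume (⋃ n, S n) + volume (⋃ (m) (n) (_ : m ≠ n), S m ∩ S n) := by
        gcongr
    _ ≤ ∑' n, volume (S n) := measure_iUnion_add_measure_iUnion_inter_le_tsum _ S
    _ ≤ _ := ENNReal.tsum_le_tsum fun n => volume_image_inter_le hf A (t n)

variable [MeasurableSpace X] [BorelSpace X]

theorem volume_image_add_volume_doubleImage_le_hausdorffMeasure (hf : LipschitzWith 1 f)
    (A : Set X) : volume (f '' A) + volume (doubleImage f A 0) ≤ μH[1] A := by
  have hmono : Monotone fun n : ℕ => doubleImage f A (n : ℝ≥0∞)⁻¹ :=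
    fun m n hmn => doubleImage_antitone f A (ENNReal.inv_le_inv.2 (by exact_mod_cast hmn))
  rw [doubleImage_zero_eq_iUnion, hmono.measure_iUnion, ENNReal.add_iSup,
    Measure.hausdorffMeasure_apply]
  refine iSup_le fun n => le_iSup₂_of_le (n : ℝ≥0∞)⁻¹
    (ENNReal.inv_pos.2 (ENNReal.natCast_ne_top n)) (le_iInf₂ fun t hAt => le_iInf fun htr => ?_)
  exact volume_image_add_volume_doubleImage_le_tsum hf hAt htr

theorem two_mul_volume_add_volume_doubleImage_union_le (hf : LipschitzWith 1 f)
    {E P N : Set X} (hP : MeasurableSet P) (hPN : Disjoint P N) {I : Set ℝ}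
    (hIP : I ⊆ f '' (E ∩ P)) (hIN : I ⊆ f '' (E ∩ N)) :
    2 * volume I + volume (doubleImage f (E ∩ P) 0 ∪ doubleImage f (E ∩ N) 0) ≤ μH[1] E :=
  calc 2 * volume I + volume (doubleImage f (E ∩ P) 0 ∪ doubleImage f (E ∩ N) 0)
      ≤ (volume I + volume (doubleImage f (E ∩ P) 0))
          + (volume I + volume (doubleImage f (E ∩ N) 0)) := by
        rw [two_mul, add_add_add_comm]
        gcongr
        exact measure_union_le _ _
    _ ≤ (volume (f '' (E ∩ P)) + volume (doubleImage f (E ∩ P) 0))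
          + (volume (f '' (E ∩ N)) + volume (doubleImage f (E ∩ N) 0)) := by gcongr
    _ ≤ μH[1] (E ∩ P) + μH[1] (E ∩ N) :=
        add_le_add (volume_image_add_volume_doubleImage_le_hausdorffMeasure hf _)
          (volume_image_add_volume_doubleImage_le_hausdorffMeasure hf _)
    _ ≤ μH[1] E := measure_inter_add_measure_inter_le _ hP hPN E

theorem volume_doubleImage_union_le (hf : LipschitzWith 1 f) {E P N : Set X}
    (hP : MeasurableSet P) (hPN : Disjoint P N) {a b c : ℝ} (hab : a ≤ b) (hc : 0 ≤ c)
    (hP' : Ioo a b ⊆ f '' (E ∩ P)) (hN' : Ioo a b ⊆ f '' (E ∩ N))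
    (hE : μH[1] E ≤ ENNReal.ofReal (2 * (b - a) + c)) :
    volume (doubleImage f (E ∩ P) 0 ∪ doubleImage f (E ∩ N) 0) ≤ ENNReal.ofReal c := by
  have h := (two_mul_volume_add_volume_doubleImage_union_le hf hP hPN hP' hN').trans hE
  rw [Real.volume_Ioo, ENNReal.ofReal_add (by linarith) hc, ENNReal.ofReal_mul zero_le_two,
    ENNReal.ofReal_ofNat] at h
  exact (ENNReal.add_le_add_iff_left (by finiteness)).1 h

end Coarea

section HalfSpace

variable {V : Type*} [NormedAddCommGroup V] [InnerProductSpace ℝ V]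

def openHalfSpace (x0 σ : V) : Set V := {p | 0 < ⟪p - x0, σ⟫}

theorem mem_openHalfSpace_neg {x0 σ p : V} :
    p ∈ openHalfSpace x0 (-σ) ↔ ⟪p - x0, σ⟫ < 0 := by
  simp only [openHalfSpace, mem_ofPred_eq, inner_neg_right, neg_pos]

theorem measurableSet_openHalfSpace [MeasurableSpace V] [BorelSpace V] (x0 σ : V) :
    MeasurableSet (openHalfSpace x0 σ) :=
  (isOpen_lt continuous_const (by fun_prop)).measurableSet

theorem disjoint_openHalfSpace_neg (x0 σ : V) :
    Disjoint (openHalfSpace x0 σ) (openHalfSpace x0 (-σ)) :=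
  disjoint_left.2 fun _ hp hp' => (mem_openHalfSpace_neg.1 hp').not_gt hp

theorem mem_image_dist_inter_openHalfSpace_of_not_joined {E : Set V} {x0 ν τ : V}
    {β r0 ρ : ℝ} (hν : ‖ν‖ = 1) (hτ : ‖τ‖ = 1) (hτν : ⟪τ, ν⟫ = 0)
    (hjoin : ∀ C : Set V, IsConnected C → C ⊆ ball x0 r0 \ E →
      ¬ ((∃ p ∈ C, β < ⟪p - x0, ν⟫) ∧ (∃ q ∈ C, ⟪q - x0, ν⟫ < -β)))
    (hρ : 0 < ρ) (hβρ : 2 * β < ρ) (hρr0 : ρ < r0) :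
    ρ ∈ (dist · x0) '' (E ∩ openHalfSpace x0 τ) := by
  by_contra hE
  set g : ℝ → V := fun θ => x0 + (ρ * cos θ) • τ + (ρ * sin θ) • ν
  have hsub : ∀ θ, g θ - x0 = (ρ * cos θ) • τ + (ρ * sin θ) • ν := fun θ => by
    simp only [g, add_assoc, add_sub_cancel_left]
  have hgν : ∀ θ, ⟪g θ - x0, ν⟫ = ρ * sin θ := fun θ => by
    simp [hsub, inner_add_left, real_inner_smul_left, hτν, hν]
  have hgτ : ∀ θ, ⟪g θ - x0, τ⟫ = ρ * cos θ := fun θ => by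
    simp [hsub, inner_add_left, real_inner_smul_left, real_inner_comm τ ν ▸ hτν, hτ]
  have hgdist : ∀ θ, dist (g θ) x0 = ρ := fun θ => by
    have h : ‖g θ - x0‖ ^ 2 = ρ ^ 2 := by
      rw [hsub, norm_add_sq_real, real_inner_smul_left, real_inner_smul_right, hτν, norm_smul,
        norm_smul, hτ, hν, Real.norm_eq_abs, Real.norm_eq_abs]
      nlinarith [sin_sq_add_cos_sq θ, sq_abs (ρ * cos θ), sq_abs (ρ * sin θ)]
    rw [dist_eq_norm, ← sq_eq_sq₀ (norm_nonneg _) hρ.le, h]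
  have hg : Continuous g := by fun_prop
  have hpi := pi_pos
  -- the open half-circle `θ ∈ (-π/2, π/2)` avoids `E` and reaches the heights `±ρ/2`
  refine hjoin (g '' Ioo (-(π / 2)) (π / 2))
    ((isConnected_Ioo (by linarith)).image g hg.continuousOn) ?_
    ⟨⟨g (π / 6), mem_image_of_mem g ⟨by linarith, by linarith⟩, ?_⟩,
      ⟨g (-(π / 6)), mem_image_of_mem g ⟨by linarith, by linarith⟩, ?_⟩⟩
  · rintro _ ⟨θ, hθ, rfl⟩
    refine ⟨mem_ball.2 ((hgdist θ).trans_lt hρr0), fun hgE => hE ⟨g θ, ⟨hgE, ?_⟩, hgdist θ⟩⟩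
    simpa only [openHalfSpace, mem_ofPred_eq, hgτ] using mul_pos hρ (cos_pos_of_mem_Ioo hθ)
  · rw [hgν, sin_pi_div_six]; linarith
  · rw [hgν, sin_neg, sin_pi_div_six]; linarith

theorem exists_inter_sphere_eq_pair {E : Set V} {x0 τ : V} {ρ : ℝ} (hτ : ‖τ‖ = 1)
    (hfar : ∀ p ∈ E ∩ sphere x0 ρ, ρ / 2 < |⟪p - x0, τ⟫|)
    (hpos : ρ ∈ (dist · x0) '' (E ∩ openHalfSpace x0 τ))
    (hneg : ρ ∈ (dist · x0) '' (E ∩ openHalfSpace x0 (-τ)))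
    (huniq_pos : ρ ∉ doubleImage (dist · x0) (E ∩ openHalfSpace x0 τ) 0)
    (huniq_neg : ρ ∉ doubleImage (dist · x0) (E ∩ openHalfSpace x0 (-τ)) 0) :
    ∃ p q, p ≠ q ∧ E ∩ sphere x0 ρ = {p, q} ∧ ρ < dist p q := by
  obtain ⟨p, ⟨hpE, hpH⟩, hpS⟩ := hpos
  obtain ⟨q, ⟨hqE, hqH⟩, hqS⟩ := hneg
  have hp := hfar p ⟨hpE, hpS⟩
  have hq := hfar q ⟨hqE, hqS⟩
  rw [abs_of_pos hpH] at hp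
  rw [abs_of_neg (mem_openHalfSpace_neg.1 hqH)] at hq
  refine ⟨p, q, (disjoint_openHalfSpace_neg x0 τ).ne_of_mem hpH hqH,
    Subset.antisymm ?_ (insert_subset ⟨hpE, hpS⟩ (singleton_subset_iff.2 ⟨hqE, hqS⟩)), ?_⟩
  · rintro r ⟨hrE, hrS⟩
    rcases lt_trichotomy ⟪r - x0, τ⟫ 0 with hr | hr | hr
    · exact Or.inr (eq_of_notMem_doubleImage_zero huniq_neg
        ⟨hrE, mem_openHalfSpace_neg.2 hr⟩ ⟨hqE, hqH⟩ hrS hqS)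
    · have := hfar r ⟨hrE, hrS⟩
      rw [hr, abs_zero] at this
      linarith [dist_nonneg.trans_eq hpS]
    · exact Or.inl (eq_of_notMem_doubleImage_zero huniq_pos ⟨hrE, hr⟩ ⟨hpE, hpH⟩ hrS hpS)
  · calc ρ < ⟪p - x0, τ⟫ - ⟪q - x0, τ⟫ := by linarith
      _ = ⟪p - q, τ⟫ := by rw [← inner_sub_left, sub_sub_sub_cancel_right]
      _ ≤ ‖p - q‖ * ‖τ‖ := real_inner_le_norm _ _
      _ = dist p q := by rw [hτ, mul_one, dist_eq_norm]

theorem Orientation.half_lt_abs_inner_rightAngleRotation [Fact (Module.finrank ℝ V = 2)]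
    (o : Orientation ℝ V (Fin 2)) {x0 ν p : V} {β ρ : ℝ} (hν : ‖ν‖ = 1)
    (hp : p ∈ sphere x0 ρ) (hpν : |⟪p - x0, ν⟫| ≤ β) (hβρ : 2 * β < ρ) :
    ρ / 2 < |⟪p - x0, o.rightAngleRotation ν⟫| := by
  have h := o.inner_sq_add_areaForm_sq ν (p - x0)
  rw [hν, one_pow, one_mul, real_inner_comm, mem_sphere_iff_norm.1 hp] at h
  rw [o.inner_rightAngleRotation_right, o.areaForm_swap, neg_neg]
  apply lt_of_pow_lt_pow_left₀ 2 (abs_nonneg _)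
  rw [sq_abs]
  nlinarith [sq_abs ⟪p - x0, ν⟫, abs_nonneg ⟪p - x0, ν⟫]

end HalfSpace

theorem two_points_on_circles_general (E : Set E2) (x0 : E2) (r0 : ℝ)
    (hr0 : 0 < r0)
    (hflat : flatness E x0 r0 ≤ 1 / 32)
    (hsep : Separates E x0 r0)
    (hlen : μH[1] E ≤ ENNReal.ofReal ((2 + 1 / 8) * r0)) :
    ∃ Ξ : Set ℝ, MeasurableSet Ξ ∧ Ξ ⊆ Ioo (r0 / 16) r0 ∧
      volume (Ioo (r0 / 16) r0 \ Ξ) ≤ ENNReal.ofReal (r0 / 4) ∧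
      ∀ ρ ∈ Ξ, ∃ p q : E2, p ≠ q ∧ E ∩ sphere x0 ρ = {p, q} ∧ ρ < dist p q := by
  obtain ⟨-, ν, hν, hstrip, hjoin⟩ := hsep
  have hβ : 2 * (flatness E x0 r0 * r0) ≤ r0 / 16 := by nlinarith
  let o : Orientation ℝ E2 (Fin 2) := (EuclideanSpace.basisFun (Fin 2) ℝ).toBasis.orientation
  set τ := o.rightAngleRotation ν
  have hτ : ‖τ‖ = 1 := (o.rightAngleRotation.norm_map ν).trans hν
  have hτν : ⟪τ, ν⟫ = 0 := o.inner_rightAngleRotation_self ν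
  have hcover : ∀ σ : E2, ‖σ‖ = 1 → ⟪σ, ν⟫ = 0 →
      Ioo (r0 / 16) r0 ⊆ (dist · x0) '' (E ∩ openHalfSpace x0 σ) := fun σ hσ hσν ρ hρ =>
    mem_image_dist_inter_openHalfSpace_of_not_joined hν hσ hσν hjoin
      (by linarith [hρ.1]) (by linarith [hρ.1]) hρ.2
  have hcover_pos := hcover τ hτ hτν
  have hcover_neg := hcover (-τ) (by rwa [norm_neg]) (by rw [inner_neg_left, hτν, neg_zero])
  have hD := volume_doubleImage_union_le (c := r0 / 4) (LipschitzWith.dist_left x0)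
    (measurableSet_openHalfSpace x0 τ) (disjoint_openHalfSpace_neg x0 τ) (by linarith)
    (by positivity) hcover_pos hcover_neg (hlen.trans_eq (by ring_nf))
  obtain ⟨Ξ, hΞ, hΞD, hΞvol⟩ :=
    exists_measurableSet_subset_sdiff (volume : Measure ℝ) measurableSet_Ioo _
  refine ⟨Ξ, hΞ, hΞD.trans sdiff_subset, hΞvol.trans hD, fun ρ hρ => ?_⟩
  obtain ⟨hρI, hρD⟩ := hΞD hρ
  have hfar : ∀ p ∈ E ∩ sphere x0 ρ, ρ / 2 < |⟪p - x0, τ⟫| := fun p hp =>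
    o.half_lt_abs_inner_rightAngleRotation hν hp.2
      (hstrip p ⟨hp.1, mem_ball.2 ((mem_sphere.1 hp.2).trans_lt hρI.2)⟩) (by linarith [hρI.1])
  exact exists_inter_sphere_eq_pair hτ hfar (hcover_pos hρI) (hcover_neg hρI)
    (fun h => hρD (Or.inl h)) (fun h => hρD (Or.inr h))

/-- Intersection with circles: a flat separating set of length at most `(2 + 1/8) r0` meets
most circles `∂B(x0,ρ)`, `ρ ∈ (r0/16, r0)`, in exactly two points at distance larger than `ρ`. -/
theorem two_points_on_circles (E : Set E2) (x0 : E2) (r0 : ℝ)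
    (hr0 : 0 < r0) (hE : RelClosedIn E (ball x0 r0)) (hx0 : x0 ∈ E)
    (hflat : flatness E x0 r0 ≤ 1 / 32)
    (hsep : Separates E x0 r0)
    (hlen : μH[1] E ≤ ENNReal.ofReal ((2 + 1 / 8) * r0)) :
    ∃ Ξ : Set ℝ, MeasurableSet Ξ ∧ Ξ ⊆ Ioo (r0 / 16) r0 ∧
      volume (Ioo (r0 / 16) r0 \ Ξ) ≤ ENNReal.ofReal (r0 / 4) ∧
      ∀ ρ ∈ Ξ, ∃ p q : E2, p ≠ q ∧ E ∩ sphere x0 ρ = {p, q} ∧ ρ < dist p q :=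
  two_points_on_circles_general E x0 r0 hr0 hflat hsep hlen
end
end

section
/- Let (B_i)_{i∈I} be a countable family of pairwise disjoint balls B_i = B(x_i, r_i) contained in B(x0, r0) with all radii r_i ≤ r0/200 and suppose Σ_{i∈I} r_i ≤ S for some S > 0. For t ∈ (0,r0), let I(t) := {i ∈ I : B(x_i, 10 r_i) ∩ ∂B(x0,t) ≠ ∅}. Then there exists a set Ξ ⊆ [r0/2, 3r0/4] with L¹([r0/2,3r0/4] \ Ξ) ≤ r0/8 such that for every ρ ∈ Ξ, Σ_{i∈I(ρ)} r_i ≤ 8 r0^{-1} Σ_{i∈I} 2·(10 r_i)·r_i ≤ 160 r0^{-1} (max_i r_i) · S. -/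
open Metric Set MeasureTheory

noncomputable section

lemma ball_inter_sphere_nonempty_iff (y x0 : E2) (s ρ : ℝ) (hρ : 0 ≤ ρ) :
    (ball y s ∩ sphere x0 ρ).Nonempty ↔ |dist y x0 - ρ| < s := by
  constructor
  · rintro ⟨z, hz1, hz2⟩
    rw [mem_sphere] at hz2
    rw [mem_ball] at hz1
    calc |dist y x0 - ρ| = |dist y x0 - dist z x0| := by rw [hz2]
      _ ≤ dist y z := abs_dist_sub_le y z x0
      _ = dist z y := dist_comm _ _
      _ < s := hz1
  · intro h
    by_cases hy : y = x0
    · obtain ⟨z, hz⟩ := (NormedSpace.sphere_nonempty (x := x0) (r := ρ)).2 hρ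
      refine ⟨z, ?_, hz⟩
      rw [mem_sphere] at hz
      have h0 : dist y x0 = 0 := by rw [hy, dist_self]
      rw [h0, zero_sub, abs_neg, abs_of_nonneg hρ] at h
      rw [mem_ball, hy, hz]
      exact h
    · have hdpos : 0 < dist y x0 := dist_pos.2 hy
      set dyx := dist y x0 with hdd
      set z := x0 + (ρ / dyx) • (y - x0) with hz
      have hz_sphere : z ∈ sphere x0 ρ := by
        rw [mem_sphere, dist_eq_norm, hz, add_sub_cancel_left, norm_smul,
          Real.norm_eq_abs, abs_of_nonneg (div_nonneg hρ hdpos.le), ← dist_eq_norm]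
        field_simp
        rfl
      refine ⟨z, ?_, hz_sphere⟩
      rw [mem_ball, dist_comm, dist_eq_norm]
      have hyz : y - z = (1 - ρ / dyx) • (y - x0) := by
        rw [hz, sub_smul, one_smul]; abel
      rw [hyz, norm_smul, Real.norm_eq_abs, ← dist_eq_norm, ← hdd]
      have h1 : |1 - ρ / dyx| * dyx = |(1 - ρ / dyx) * dyx| := by
        rw [abs_mul, abs_of_pos hdpos]
      have h2 : (1 - ρ / dyx) * dyx = dyx - ρ := by field_simp
      rw [h1, h2]
      exact h

/-- The measure-theoretic core: a Chebyshev/Markov selection of good radii. -/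
lemma markov_selection {I : Type} [Countable I] (d r : I → ℝ) (r0 A : ℝ)
    (hr : ∀ i, 0 < r i) (hr0 : 0 < r0)
    (hsum : Summable r)
    (hsumA : Summable (fun i => 2 * (10 * r i) * r i))
    (hA : A = ∑' i, 2 * (10 * r i) * r i) (hApos : 0 < A) :
    ∃ Bad : Set ℝ, MeasurableSet Bad ∧
      volume (Bad ∩ Icc (r0 / 2) (3 * r0 / 4)) ≤ ENNReal.ofReal (r0 / 8) ∧
      ∀ ρ ∉ Bad,
        ∑' i, ({i | ρ ∈ Ioo (d i - 10 * r i) (d i + 10 * r i)} : Set I).indicator r i ≤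
          8 * r0⁻¹ * A := by
  have hcRpos : 0 < 8 * r0⁻¹ * A := by
    have : (0:ℝ) < r0⁻¹ := inv_pos.2 hr0
    positivity
  set c : ENNReal := ENNReal.ofReal (8 * r0⁻¹ * A) with hc
  have hc0 : c ≠ 0 := (ENNReal.ofReal_pos.2 hcRpos).ne'
  have hctop : c ≠ ⊤ := ENNReal.ofReal_ne_top
  set F : ℝ → ENNReal := fun ρ =>
    ∑' i, (Ioo (d i - 10 * r i) (d i + 10 * r i)).indicator
      (fun _ => ENNReal.ofReal (r i)) ρ with hF
  have hFmeas : Measurable F :=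
    Measurable.ennreal_tsum (fun i =>
      (measurable_const.indicator measurableSet_Ioo))
  set μ := volume.restrict (Icc (r0 / 2) (3 * r0 / 4)) with hμ
  have hμle : ∀ s : Set ℝ, μ s ≤ volume s := by
    intro s
    exact Measure.restrict_le_self s
  have hint : ∫⁻ ρ, F ρ ∂μ ≤ ENNReal.ofReal A := by
    rw [hF, lintegral_tsum (fun i =>
      (measurable_const.indicator measurableSet_Ioo).aemeasurable)]
    have h1 : ∀ i, ∫⁻ ρ, (Ioo (d i - 10 * r i) (d i + 10 * r i)).indicator
        (fun _ => ENNReal.ofReal (r i)) ρ ∂μ ≤ ENNReal.ofReal (2 * (10 * r i) * r i) := by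
      intro i
      rw [lintegral_indicator measurableSet_Ioo, setLIntegral_const]
      calc ENNReal.ofReal (r i) * μ (Ioo (d i - 10 * r i) (d i + 10 * r i))
          ≤ ENNReal.ofReal (r i) * volume (Ioo (d i - 10 * r i) (d i + 10 * r i)) :=
            mul_le_mul_right (hμle _) _
        _ = ENNReal.ofReal (r i) * ENNReal.ofReal (20 * r i) := by
            rw [Real.volume_Ioo]; congr 1; ring
        _ = ENNReal.ofReal (2 * (10 * r i) * r i) := by
            rw [← ENNReal.ofReal_mul (hr i).le]; congr 1; ring
    calc ∑' i, ∫⁻ ρ, (Ioo (d i - 10 * r i) (d i + 10 * r i)).indicator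
          (fun _ => ENNReal.ofReal (r i)) ρ ∂μ
        ≤ ∑' i, ENNReal.ofReal (2 * (10 * r i) * r i) := ENNReal.tsum_le_tsum h1
      _ = ENNReal.ofReal A := by
          rw [hA]
          exact (ENNReal.ofReal_tsum_of_nonneg (fun i => by nlinarith [hr i]) hsumA).symm
  refine ⟨{ρ | c ≤ F ρ}, measurableSet_le measurable_const hFmeas, ?_, ?_⟩
  · have hBadvol : μ {ρ | c ≤ F ρ} ≤ ENNReal.ofReal (r0 / 8) := by
      calc μ {ρ | c ≤ F ρ} ≤ (∫⁻ ρ, F ρ ∂μ) / c :=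
            meas_ge_le_lintegral_div hFmeas.aemeasurable hc0 hctop
        _ ≤ ENNReal.ofReal A / ENNReal.ofReal (8 * r0⁻¹ * A) :=
            ENNReal.div_le_div_right hint _
        _ = ENNReal.ofReal (A / (8 * r0⁻¹ * A)) :=
            (ENNReal.ofReal_div_of_pos hcRpos).symm
        _ = ENNReal.ofReal (r0 / 8) := by
            congr 1
            rw [div_eq_div_iff (by positivity) (by norm_num)]
            field_simp
    calc volume ({ρ | c ≤ F ρ} ∩ Icc (r0 / 2) (3 * r0 / 4))
        = μ {ρ | c ≤ F ρ} :=
          (Measure.restrict_apply (measurableSet_le measurable_const hFmeas)).symm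
      _ ≤ ENNReal.ofReal (r0 / 8) := hBadvol
  · intro ρ hρ
    have hFρ : F ρ < c := lt_of_not_ge hρ
    set s : Set I := {i | ρ ∈ Ioo (d i - 10 * r i) (d i + 10 * r i)} with hs
    have hsummable_ind : Summable (s.indicator r) := hsum.indicator s
    have hind_nonneg : ∀ i, 0 ≤ s.indicator r i :=
      fun i => Set.indicator_nonneg (fun j _ => (hr j).le) i
    have hFρ_eq : F ρ = ENNReal.ofReal (∑' i, s.indicator r i) := by
      rw [ENNReal.ofReal_tsum_of_nonneg hind_nonneg hsummable_ind, hF]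
      refine tsum_congr (fun i => ?_)
      by_cases h : i ∈ s
      · rw [Set.indicator_of_mem (by exact h) (fun _ => ENNReal.ofReal (r i)),
          Set.indicator_of_mem h]
      · rw [Set.indicator_of_notMem (by exact h) (fun _ => ENNReal.ofReal (r i)),
          Set.indicator_of_notMem h, ENNReal.ofReal_zero]
    rw [hFρ_eq, hc] at hFρ
    exact ((ENNReal.ofReal_lt_ofReal_iff_of_nonneg
      (tsum_nonneg hind_nonneg)).1 hFρ).le

/-- Selection of good radii: for a countable disjoint family of balls `B(x_i, r_i) ⊆ B(x0,r0)`
with `r_i ≤ r0/200` and `Σ r_i ≤ S`, most radii `ρ ∈ [r0/2, 3r0/4]` (up to a bad set of measure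
at most `r0/8`) satisfy `Σ_{i ∈ I(ρ)} r_i ≤ 8 r0⁻¹ Σ_i 2·(10 r_i)·r_i ≤ 160 r0⁻¹ (sup_i r_i) S`,
where `I(ρ)` is the set of indices with `B(x_i, 10 r_i) ∩ ∂B(x0,ρ) ≠ ∅`. -/
theorem good_radius_selection {I : Type} [Countable I]
    (x0 : E2) (r0 S : ℝ) (x : I → E2) (r : I → ℝ)
    (hr0 : 0 < r0) (hS : 0 < S)
    (hr : ∀ i, 0 < r i) (hrsmall : ∀ i, r i ≤ r0 / 200)
    (hsub : ∀ i, ball (x i) (r i) ⊆ ball x0 r0)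
    (hdisj : Pairwise fun i j => Disjoint (ball (x i) (r i)) (ball (x j) (r j)))
    (hsum : Summable r) (hSsum : ∑' i, r i ≤ S) :
    ∃ Ξ : Set ℝ, MeasurableSet Ξ ∧ Ξ ⊆ Icc (r0 / 2) (3 * r0 / 4) ∧
      volume (Icc (r0 / 2) (3 * r0 / 4) \ Ξ) ≤ ENNReal.ofReal (r0 / 8) ∧
      ∀ ρ ∈ Ξ,
        (∑' i : {i : I // (ball (x i) (10 * r i) ∩ sphere x0 ρ).Nonempty}, r i.1) ≤
            8 * r0⁻¹ * ∑' i, 2 * (10 * r i) * r i ∧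
        8 * r0⁻¹ * (∑' i, 2 * (10 * r i) * r i) ≤ 160 * r0⁻¹ * (⨆ i, r i) * S := by
  classical
  have hbdd : BddAbove (range r) := ⟨r0 / 200, by rintro _ ⟨i, rfl⟩; exact hrsmall i⟩
  have hle_sup : ∀ i, r i ≤ ⨆ j, r j := fun i => le_ciSup hbdd i
  have hsup_nonneg : 0 ≤ ⨆ i, r i := by
    cases isEmpty_or_nonempty I with
    | inl h => simp [Real.iSup_of_isEmpty]
    | inr h => exact le_trans (hr h.some).le (hle_sup h.some)
  have hsumA : Summable (fun i => 2 * (10 * r i) * r i) := by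
    refine Summable.of_nonneg_of_le (fun i => by nlinarith [hr i]) (fun i => ?_)
      (hsum.mul_left (20 * (⨆ j, r j)))
    nlinarith [hle_sup i, hr i]
  have hA_nonneg : 0 ≤ ∑' i, 2 * (10 * r i) * r i :=
    tsum_nonneg (fun i => by nlinarith [hr i])
  have hsum_nonneg : 0 ≤ ∑' i, r i := tsum_nonneg (fun i => (hr i).le)
  have hsecond : 8 * r0⁻¹ * (∑' i, 2 * (10 * r i) * r i) ≤
      160 * r0⁻¹ * (⨆ i, r i) * S := by
    have h2 : (∑' i, 2 * (10 * r i) * r i) ≤ ∑' i, 20 * (⨆ j, r j) * r i := by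
      refine Summable.tsum_le_tsum (fun i => ?_) hsumA (hsum.mul_left _)
      nlinarith [hle_sup i, hr i]
    have h3 : ∑' i, 20 * (⨆ j, r j) * r i = 20 * (⨆ j, r j) * ∑' i, r i := tsum_mul_left
    have h4 : (∑' i, 2 * (10 * r i) * r i) ≤ 20 * (⨆ j, r j) * S := by
      rw [h3] at h2
      nlinarith [hsum_nonneg]
    have h5 : (0:ℝ) < r0⁻¹ := inv_pos.2 hr0
    nlinarith
  cases isEmpty_or_nonempty I with
  | inl hempty =>
    refine ⟨Icc (r0 / 2) (3 * r0 / 4), measurableSet_Icc, subset_rfl, ?_, ?_⟩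
    · simp [hr0.le]
    · intro ρ _
      refine ⟨?_, hsecond⟩
      have h1 : (∑' i : {i : I // (ball (x i) (10 * r i) ∩ sphere x0 ρ).Nonempty}, r i.1)
          = 0 := by
        have hE : IsEmpty {i : I // (ball (x i) (10 * r i) ∩ sphere x0 ρ).Nonempty} :=
          ⟨fun i => hempty.elim i.1⟩
        exact (tsum_congr (fun i => (hE.elim i : r i.1 = (0:ℝ)))).trans tsum_zero
      rw [h1]
      positivity
  | inr hne =>
    have hApos : 0 < ∑' i, 2 * (10 * r i) * r i := by
      refine lt_of_lt_of_le ?_ (Summable.le_tsum hsumA hne.some (fun j _ => by nlinarith [hr j]))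
      nlinarith [hr hne.some]
    obtain ⟨Bad, hBadmeas, hBadvol, hBadsel⟩ :=
      markov_selection (fun i => dist (x i) x0) r r0 (∑' i, 2 * (10 * r i) * r i)
        hr hr0 hsum hsumA rfl hApos
    refine ⟨Icc (r0 / 2) (3 * r0 / 4) \ Bad, measurableSet_Icc.diff hBadmeas,
      diff_subset, ?_, ?_⟩
    · rw [diff_diff_right_self]
      calc volume (Icc (r0 / 2) (3 * r0 / 4) ∩ Bad)
          = volume (Bad ∩ Icc (r0 / 2) (3 * r0 / 4)) := by rw [Set.inter_comm]
        _ ≤ ENNReal.ofReal (r0 / 8) := hBadvol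
    · rintro ρ ⟨hρIcc, hρBad⟩
      refine ⟨?_, hsecond⟩
      have hρpos : 0 < ρ := lt_of_lt_of_le (by linarith) hρIcc.1
      have hkey := hBadsel ρ hρBad
      have hseq : ({i : I | (ball (x i) (10 * r i) ∩ sphere x0 ρ).Nonempty} : Set I) =
          {i | ρ ∈ Ioo (dist (x i) x0 - 10 * r i) (dist (x i) x0 + 10 * r i)} := by
        ext i
        rw [mem_setOf_eq, mem_setOf_eq,
          ball_inter_sphere_nonempty_iff _ _ _ _ hρpos.le, mem_Ioo, abs_lt]
        constructor <;> intro h <;> constructor <;> linarith [h.1, h.2]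
      have hsub_eq : (∑' i : {i : I // (ball (x i) (10 * r i) ∩ sphere x0 ρ).Nonempty},
          r i.1) = ∑' i, ({i : I | (ball (x i) (10 * r i) ∩ sphere x0 ρ).Nonempty} :
            Set I).indicator r i :=
        tsum_subtype _ r
      rw [hsub_eq, hseq]
      exact hkey
end
end
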